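/- arXiv:1105.2849 — 11 statements merged into one kernel-verified Lean document; each statement's English description precedes it below -/
import Mathlib

section
/- The word (0001)^ω (the periodic infinite binary word with period 0001) contains no factor of the form x·x·xᴿ·xᴿ, where x is a nonempty binary word and xᴿ denotes its reversal. -/
/-- `L` is a factor of the periodic infinite word `(0001)^ω`. -/
def IsFactorP (L : List Bool) : Prop :=
  ∃ n, L <:+: (List.replicate n [false, false, false, true]).flatten

lemma flatten_replicate_len (m : ℕ) :
    ((List.replicate m [false, false, false, true]).flatten).length = 4 * m := by
  simp [mul_comm]

lemma flatten_replicate_getElem (n i : ℕ)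
    (h : i < ((List.replicate n [false, false, false, true]).flatten).length) :
    ((List.replicate n [false, false, false, true]).flatten)[i] = decide (i % 4 = 3) := by
  induction n generalizing i with
  | zero => simp at h
  | succ m ih =>
    have hlen := flatten_replicate_len (m + 1)
    have heq : (List.replicate (m + 1) [false, false, false, true]).flatten
        = [false, false, false, true] ++ (List.replicate m [false, false, false, true]).flatten := by
      rw [List.replicate_succ, List.flatten_cons]
    rw [List.getElem_of_eq heq]
    rcases lt_or_ge i 4 with hi | hi
    · rw [List.getElem_append_left (by simpa using hi)]
      interval_cases i <;> simp
    · rw [List.getElem_append_right (by simpa using hi)]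
      have hm := flatten_replicate_len m
      have hb : i - [false, false, false, true].length
          < ((List.replicate m [false, false, false, true]).flatten).length := by
        simp only [List.length_cons, List.length_nil]
        rw [hm]; rw [heq] at h; simp at h; omega
      rw [ih _ hb]
      show decide ((i - 4) % 4 = 3) = decide (i % 4 = 3)
      have hmod : (i - 4) % 4 = i % 4 := by omega
      rw [hmod]

theorem stmt0 (x : List Bool) (hx : x ≠ []) :
    ¬ IsFactorP (x ++ x ++ x.reverse ++ x.reverse) := by
  rintro ⟨m, s, t, hM⟩
  set n := x.length with hn
  have hn1 : 1 ≤ n := List.length_pos_iff.mpr hx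
  set w := x ++ x ++ x.reverse ++ x.reverse with hw
  have hwlen : w.length = 4 * n := by simp [hw, hn]; omega
  -- key: w[j] = decide ((s.length + j) % 4 = 3)
  have key : ∀ j (hj : j < w.length), w[j] = decide ((s.length + j) % 4 = 3) := by
    intro j hj
    have hM' : s ++ (w ++ t) = (List.replicate m [false, false, false, true]).flatten := by
      rw [← hM]; simp
    have hlt : s.length + j < ((List.replicate m [false, false, false, true]).flatten).length := by
      rw [← hM']; simp; omega
    have := flatten_replicate_getElem m (s.length + j) hlt
    rw [List.getElem_of_eq hM'.symm] at this
    rw [List.getElem_append_right (by omega)] at this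
    simp only [Nat.add_sub_cancel_left] at this
    rw [List.getElem_append_left (by omega)] at this
    exact this
  -- index lemmas
  have idx1 : ∀ j (hj : j < n), w[j]'(by omega) = x[j] := by
    intro j hj
    show (x ++ x ++ x.reverse ++ x.reverse)[j]'(by simp [hn] at hj ⊢; omega) = x[j]
    rw [List.getElem_append_left (by simp [← hn]; omega),
        List.getElem_append_left (by simp [← hn]; omega),
        List.getElem_append_left (by rw [← hn]; omega)]
  have idx2 : ∀ j (hj : j < n), w[n + j]'(by omega) = x[j] := by
    intro j hj
    show (x ++ x ++ x.reverse ++ x.reverse)[n + j]'(by simp [hn] at hj ⊢; omega) = x[j]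
    rw [List.getElem_append_left (by simp [← hn]; omega),
        List.getElem_append_left (by simp [← hn]; omega),
        List.getElem_append_right (by rw [← hn]; omega)]
    congr 1
    omega
  have idx3 : ∀ j (hj : j < n), w[2 * n + j]'(by omega) = x[n - 1 - j] := by
    intro j hj
    show (x ++ x ++ x.reverse ++ x.reverse)[2 * n + j]'(by simp [hn] at hj ⊢; omega)
        = x[n - 1 - j]
    rw [List.getElem_append_left (by simp [← hn]; omega),
        List.getElem_append_right (by simp [← hn]; omega)]
    rw [List.getElem_reverse]
    congr 1
    simp [← hn]
    omega
  by_cases hall : ∀ a ∈ x, a = false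
  · -- all false: w[0..3] all false, but one of them must be true
    have hwall : ∀ a ∈ w, a = false := by
      rw [hw]
      intro a hamem
      simp only [List.mem_append, List.mem_reverse] at hamem
      rcases hamem with ((h | h) | h) | h <;> exact hall _ h
    have hwf : ∀ j (hj : j < w.length), w[j] = false := fun j hj =>
      hwall _ (List.getElem_mem hj)
    have h0 := (key 0 (by omega)).symm.trans (hwf 0 (by omega))
    have h1 := (key 1 (by omega)).symm.trans (hwf 1 (by omega))
    have h2 := (key 2 (by omega)).symm.trans (hwf 2 (by omega))
    have h3 := (key 3 (by omega)).symm.trans (hwf 3 (by omega))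
    simp only [decide_eq_false_iff_not] at h0 h1 h2 h3
    omega
  · push_neg at hall
    obtain ⟨a, ha, haf⟩ := hall
    obtain ⟨p, hp, hpa⟩ := List.getElem_of_mem ha
    have hpn : p < n := by rw [hn]; exact hp
    have hx_true : x[p]'hp = true := by
      rw [hpa]; exact eq_true_of_ne_false haf
    have e1 : ((s.length + p) % 4 = 3) := by
      have := (key p (by omega)).symm.trans ((idx1 p hpn).trans hx_true)
      simpa using this
    have e2 : ((s.length + (n + p)) % 4 = 3) := by
      have := (key (n + p) (by omega)).symm.trans ((idx2 p hpn).trans hx_true)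
      simpa using this
    have e3 : ((s.length + (2 * n + (n - 1 - p))) % 4 = 3) := by
      have h' : x[n - 1 - (n - 1 - p)]'(by rw [hn] at *; omega) = true := by
        have hpe : n - 1 - (n - 1 - p) = p := by omega
        simp_rw [hpe]; exact hx_true
      have := (key (2 * n + (n - 1 - p)) (by omega)).symm.trans
        ((idx3 (n - 1 - p) (by omega)).trans h')
      simpa using this
    omega
end

section
/- The word (0001)^ω contains no factor of the form x·xᴿ·x·xᴿ, where x is a nonempty binary word and xᴿ denotes its reversal. -/
lemma wlen (n : ℕ) : ((List.replicate n [false, false, false, true]).flatten).length = 4 * n := by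
  induction n with
  | zero => simp
  | succ n ih =>
    rw [List.replicate_succ, List.flatten_cons, List.length_append, ih]
    simp only [List.length_cons, List.length_nil]
    omega

lemma wget (n m : ℕ) (hm : m < 4 * n) :
    ((List.replicate n [false, false, false, true]).flatten)[m]? =
      some (decide (m % 4 = 3)) := by
  induction n generalizing m with
  | zero => omega
  | succ n ih =>
    rw [List.replicate_succ, List.flatten_cons]
    by_cases h4 : m < 4
    · rw [List.getElem?_append_left (by simp; omega)]
      interval_cases m <;> simp
    · rw [List.getElem?_append_right (by simp; omega)]
      rw [show m - ([false, false, false, true] : List Bool).length = m - 4 by simp]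
      rw [ih _ (by omega)]
      congr 1
      simp only [decide_eq_decide]
      omega

theorem stmt1 (x : List Bool) (hx : x ≠ []) :
    ¬ IsFactorP (x ++ x.reverse ++ x ++ x.reverse) := by
  rintro ⟨n, s, t, hst⟩
  set u : List Bool := x ++ x.reverse ++ x ++ x.reverse with hu
  set v : List Bool := x ++ x.reverse with hv
  have huv : u = v ++ v := by simp [hu, hv, List.append_assoc]
  set k := x.length with hk
  have hk1 : 1 ≤ k := by
    rcases x with _ | _ <;> simp_all [hk]
  have hvlen : v.length = 2 * k := by simp [hv]; omega
  have hulen : u.length = 4 * k := by simp [hu]; omega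
  set i := s.length with hi
  have hWlen : (4 : ℕ) * n = i + u.length + t.length := by
    rw [← wlen n, ← hst]; simp; omega
  have hw : ∀ j, j < u.length → u[j]? = some (decide ((i + j) % 4 = 3)) := by
    intro j hj
    have hlt : i + j < 4 * n := by omega
    have h1 := wget n (i + j) hlt
    rw [← hst, List.append_assoc, List.getElem?_append_right (by omega),
      Nat.add_sub_cancel_left, List.getElem?_append_left hj] at h1
    exact h1
  have hpal : v.reverse = v := by simp [hv]
  have hvget : ∀ j, j < 2 * k → v[j]? = some (decide ((i + j) % 4 = 3)) := by
    intro j hj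
    have := hw j (by omega)
    rw [huv, List.getElem?_append_left (by omega)] at this
    exact this
  -- find a position carrying `true` in u, hence in v
  have hj0 : (i + (3 - i % 4)) % 4 = 3 := by omega
  set j0 := 3 - i % 4 with hj0def
  have hj0lt : j0 < u.length := by omega
  have hu0 : u[j0]? = some true := by rw [hw _ hj0lt, hj0]; simp
  have hj1 : ∃ j1, j1 < 2 * k ∧ v[j1]? = some true := by
    by_cases hc : j0 < 2 * k
    · refine ⟨j0, hc, ?_⟩
      rw [huv, List.getElem?_append_left (by omega)] at hu0
      exact hu0
    · refine ⟨j0 - 2 * k, by omega, ?_⟩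
      rw [huv, List.getElem?_append_right (by omega), hvlen] at hu0
      exact hu0
  obtain ⟨j1, hj1lt, hj1t⟩ := hj1
  have h1 : (i + j1) % 4 = 3 := by
    have := hvget j1 hj1lt
    rw [hj1t] at this
    simpa using this.symm
  -- by palindromicity position 2k-1-j1 is also true
  have hj2t : v[2 * k - 1 - j1]? = some true := by
    have hr := List.getElem?_reverse (l := v) (i := j1) (by omega)
    rw [hpal, hj1t, hvlen, show 2 * k - 1 - j1 = 2 * k - 1 - j1 from rfl] at hr
    exact hr.symm
  have h2 : (i + (2 * k - 1 - j1)) % 4 = 3 := by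
    have := hvget _ (by omega : 2 * k - 1 - j1 < 2 * k)
    rw [hj2t] at this
    simpa using this.symm
  omega
end

section
/- The word (0001)^ω contains no factor of the form x·x·g(x)·g(x), where x is a nonempty binary word and g is the antimorphic involution sending a word to the complement of its reversal (0↔1). -/
lemma count_true_take_flatten_replicate (n m : ℕ) (hm : m ≤ 4 * n) :
    (((List.replicate n [false, false, false, true]).flatten).take m).count true = m / 4 := by
  induction n generalizing m with
  | zero => simp_all
  | succ n ih =>
    rw [List.replicate_succ, List.flatten_cons, List.take_append]
    by_cases hm4 : m ≤ 4
    · interval_cases m <;> simp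
    · rw [List.take_of_length_le (by simp; omega), List.count_append]
      simp only [List.length_cons, List.length_nil]
      rw [ih (m - 4) (by omega), show [false, false, false, true].count true = 1 from rfl]
      omega

lemma IsFactorP.count_true {L : List Bool} (hL : IsFactorP L) (h4 : 4 ∣ L.length) :
    L.count true = L.length / 4 := by
  obtain ⟨n, s, t, hst⟩ := hL
  set F := (List.replicate n [false, false, false, true]).flatten
  have hlen : s.length + L.length + t.length = 4 * n := by
    have hF : F.length = 4 * n := by simp [F, mul_comm]
    rw [← hF, ← hst, List.length_append, List.length_append]
  have hs : F.take s.length = s := by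
    rw [← hst, List.append_assoc, List.take_left]
  have hsL : F.take (s.length + L.length) = s ++ L := by
    rw [← hst, ← List.length_append, List.take_left]
  have hcs := count_true_take_flatten_replicate n s.length (by omega)
  have hcsL := count_true_take_flatten_replicate n (s.length + L.length) (by omega)
  rw [hs] at hcs
  rw [hsL, List.count_append, hcs] at hcsL
  omega

lemma count_true_map_not (x : List Bool) : (x.map (fun b => !b)).count true = x.count false :=
  List.count_map_of_injective x _ Bool.not_injective false

theorem stmt3 (x : List Bool) (hx : x ≠ []) :
    ¬ IsFactorP (x ++ x ++ (List.map (fun b => !b) x).reverse ++ (List.map (fun b => !b) x).reverse) := by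
  intro hfac
  have hcount := hfac.count_true (by simp; omega)
  simp only [List.count_append, List.count_reverse, count_true_map_not, List.length_append,
    List.length_reverse, List.length_map] at hcount
  have := List.count_false_add_count_true x
  exact hx (List.length_eq_zero_iff.mp (by omega))
end

section
/- The word (0001)^ω contains no factor of the form x·g(x)·x·g(x), where x is a nonempty binary word and g(x) is the reverse complement of x. -/
namespace List

theorem count_true_take_flatten_replicate (k n j : ℕ) :
    ((replicate n (replicate k false ++ [true])).flatten.take j).count true
      = min j ((k + 1) * n) / (k + 1) := by
  induction n generalizing j with
  | zero => simp
  | succ n ih =>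
    rw [replicate_succ, flatten_cons, take_append, count_append, ih, length_append,
      length_replicate, length_singleton]
    rcases Nat.lt_or_ge j (k + 1) with hj | hj
    · have hjk : j ≤ k := by omega
      have hmin : min j ((k + 1) * (n + 1)) = j := min_eq_left (by rw [Nat.mul_succ]; omega)
      simp [take_append, count_replicate, Nat.sub_eq_zero_of_le hj.le,
        Nat.sub_eq_zero_of_le hjk, hmin, Nat.div_eq_of_lt hj]
    · obtain ⟨i, rfl⟩ := Nat.exists_eq_add_of_le hj
      have hmin : min (k + 1 + i) ((k + 1) * (n + 1)) = k + 1 + min i ((k + 1) * n) := by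
        rw [Nat.mul_succ]; omega
      have hblock : (replicate k false ++ [true]).count true = 1 := by simp [count_replicate]
      rw [take_of_length_le (by simp), Nat.add_sub_cancel_left, hmin, hblock,
        Nat.add_div_left _ (Nat.succ_pos k), Nat.add_comm]

theorem count_true_le_of_infix_flatten_replicate {k n : ℕ} {L : List Bool}
    (h : L <:+: (replicate n (replicate k false ++ [true])).flatten) :
    (k + 1) * L.count true ≤ L.length + k := by
  obtain ⟨s, u, hsLu⟩ := h
  have hs := count_true_take_flatten_replicate k n s.length
  have hsL := count_true_take_flatten_replicate k n (s ++ L).length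
  rw [← hsLu, append_assoc, take_left] at hs
  rw [← hsLu, take_left, count_append] at hsL
  set P := (k + 1) * n
  have upper : (k + 1) * (s.count true + L.count true) ≤ min (s ++ L).length P := by
    rw [hsL]; exact Nat.mul_div_le _ _
  have lower : min s.length P < (k + 1) * (s.count true + 1) := by
    rw [hs]; exact Nat.lt_mul_div_succ _ (Nat.succ_pos k)
  rw [length_append, Nat.mul_add] at upper
  rw [Nat.mul_add, Nat.mul_one] at lower
  omega

theorem count_true_reverse_map_not (x : List Bool) :
    ((x.map not).reverse).count true = x.count false := by
  rw [count_reverse]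
  exact count_map_of_injective x not Bool.not_injective false

end List

open List in
theorem stmt4 (x : List Bool) (hx : x ≠ []) :
    ¬ IsFactorP (x ++ (List.map (fun b => !b) x).reverse ++ x ++ (List.map (fun b => !b) x).reverse) := by
  rintro ⟨n, h⟩
  have hbound := count_true_le_of_infix_flatten_replicate (k := 3) h
  simp only [count_append, length_append, length_reverse, length_map,
    count_true_reverse_map_not] at hbound
  have hbalance := count_true_add_count_false x
  have hpos : 0 < x.length := length_pos_iff.mpr hx
  omega
end

section
/- Let w be the infinite binary word w = ∏_{i≥0} 0²1^{t_i+2}, where t_i is the i-th letter of the Thue–Morse sequence. Then w contains no factor of the form x·x·x·x with x a nonempty binary word. -/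
def tm (i : Nat) : Nat := (Nat.digits 2 i).sum % 2

lemma tm_le_one (i : ℕ) : tm i ≤ 1 := Nat.le_of_lt_succ (Nat.mod_lt _ (by norm_num))

lemma tm_even (m : ℕ) : tm (2 * m) = tm m := by
  rcases Nat.eq_zero_or_pos m with h | h
  · simp [h]
  · unfold tm
    rw [Nat.digits_def' (by norm_num : (1:ℕ) < 2) (by positivity)]
    simp [Nat.mul_mod_right, Nat.mul_div_cancel_left _ (by norm_num : (0:ℕ) < 2)]

lemma tm_odd (m : ℕ) : tm (2 * m + 1) = (tm m + 1) % 2 := by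
  unfold tm
  rw [Nat.digits_def' (by norm_num : (1:ℕ) < 2) (by omega)]
  have h1 : (2 * m + 1) % 2 = 1 := by omega
  have h2 : (2 * m + 1) / 2 = m := by omega
  rw [h1, h2]
  simp [List.sum_cons, Nat.add_mod]
  omega

theorem tm_no_overlap : ∀ d, 1 ≤ d → ∀ i, ¬ (∀ j, j ≤ d → tm (i + j) = tm (i + j + d)) := by
  intro d
  induction d using Nat.strong_induction_on with
  | _ d ih =>
    intro hd i h
    rcases Nat.even_or_odd i with ⟨m, hi⟩ | ⟨m, hi⟩
    all_goals rcases Nat.even_or_odd d with ⟨e, hdd⟩ | ⟨e, hdd⟩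
    -- i = 2m, d even = 2e
    · have he : 1 ≤ e := by omega
      refine ih e (by omega) (by omega) m (fun j hj => ?_)
      have hh := h (2*j) (by omega)
      rw [show i + 2*j + d = 2*(m+j+e) by omega, show i + 2*j = 2*(m+j) by omega,
        tm_even, tm_even] at hh
      exact hh
    -- i = 2m, d odd = 2e+1
    · rcases Nat.eq_or_lt_of_le hd with hd1 | hd2
      · -- d = 1
        have h0 := h 0 (by omega)
        rw [show i + 0 + d = 2*m+1 by omega, show i + 0 = 2*m by omega, tm_odd, tm_even] at h0
        have := tm_le_one m; omega
      · have he : 1 ≤ e := by omega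
        have hE : ∀ j, j ≤ e → tm (m + j) = (tm (m + j + e) + 1) % 2 := by
          intro j hj
          have hh := h (2*j) (by omega)
          rwa [show i + 2*j + d = 2*(m+j+e)+1 by omega, show i + 2*j = 2*(m+j) by omega,
            tm_odd, tm_even] at hh
        have hO : ∀ j, j ≤ e → (tm (m + j) + 1) % 2 = tm (m + j + e + 1) := by
          intro j hj
          have hh := h (2*j+1) (by omega)
          rwa [show i + (2*j+1) + d = 2*(m+j+e+1) by omega, show i + (2*j+1) = 2*(m+j)+1 by omega,
            tm_even, tm_odd] at hh
        refine ih 1 (by omega) (by omega) (m + e) (fun j hj => ?_)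
        interval_cases j
        · have h1 := hE 0 (by omega); have h2 := hO 0 (by omega)
          simp only [Nat.add_zero] at h1 h2
          have a1 := tm_le_one m; have a2 := tm_le_one (m+e); have a3 := tm_le_one (m+e+1)
          simp only [Nat.add_zero]
          omega
        · have h1 := hE 1 (by omega); have h2 := hO 1 (by omega)
          rw [show m+1+e = m+e+1 by omega] at h1
          rw [show m+1+e+1 = m+e+2 by omega] at h2
          have a1 := tm_le_one (m+1); have a2 := tm_le_one (m+e+1); have a3 := tm_le_one (m+e+2)
          rw [show m+e+1+1 = m+e+2 by omega]
          omega
    -- i = 2m+1, d even = 2e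
    · have he : 1 ≤ e := by omega
      refine ih e (by omega) (by omega) (m) (fun j hj => ?_)
      have hh := h (2*j) (by omega)
      rw [show i + 2*j + d = 2*(m+j+e)+1 by omega, show i + 2*j = 2*(m+j)+1 by omega,
        tm_odd, tm_odd] at hh
      have a1 := tm_le_one (m+j); have a2 := tm_le_one (m+j+e)
      omega
    -- i = 2m+1, d odd = 2e+1
    · rcases Nat.eq_or_lt_of_le hd with hd1 | hd2
      · -- d = 1
        have h1 := h 1 (by omega)
        rw [show i + 1 + d = 2*(m+1)+1 by omega, show i + 1 = 2*(m+1) by omega,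
          tm_odd, tm_even] at h1
        have := tm_le_one (m+1); omega
      · have he : 1 ≤ e := by omega
        have hE : ∀ j, 1 ≤ j → j ≤ e+1 → tm (m + j) = (tm (m + j + e) + 1) % 2 := by
          intro j hj1 hj2
          have hh := h (2*j-1) (by omega)
          rwa [show i + (2*j-1) + d = 2*(m+j+e)+1 by omega, show i + (2*j-1) = 2*(m+j) by omega,
            tm_odd, tm_even] at hh
        have hO : ∀ j, j ≤ e → (tm (m + j) + 1) % 2 = tm (m + j + e + 1) := by
          intro j hj
          have hh := h (2*j) (by omega)
          rwa [show i + 2*j + d = 2*(m+j+e+1) by omega, show i + 2*j = 2*(m+j)+1 by omega,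
            tm_even, tm_odd] at hh
        refine ih 1 (by omega) (by omega) m (fun j hj => ?_)
        interval_cases j
        · have h1 := hE 1 (by omega) (by omega); have h2 := hO 0 (by omega)
          simp only [Nat.add_zero] at h2
          rw [show m+1+e = m+e+1 by omega] at h1
          have a1 := tm_le_one m; have a2 := tm_le_one (m+1); have a3 := tm_le_one (m+e+1)
          simp only [Nat.add_zero]
          omega
        · have h1 := hE 2 (by omega) (by omega); have h2 := hO 1 (by omega)
          rw [show m+2+e = m+1+e+1 by omega] at h1
          have a1 := tm_le_one (m+1); have a2 := tm_le_one (m+2); have a3 := tm_le_one (m+1+e+1)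
          rw [show m+1+1 = m+2 by omega]
          omega
def wBlock (i : Nat) : List Bool := [false, false] ++ List.replicate (tm i + 2) true

def wPrefix (n : Nat) : List Bool := ((List.range n).map wBlock).flatten

def IsFactorW (L : List Bool) : Prop := ∃ n, L <:+: wPrefix n

/-- Cumulative lengths of blocks. -/
def Sw : ℕ → ℕ
  | 0 => 0
  | n + 1 => Sw n + (tm n + 4)

lemma Sw_succ (n : ℕ) : Sw (n+1) = Sw n + (tm n + 4) := rfl

lemma length_wBlock (i : ℕ) : (wBlock i).length = tm i + 4 := by
  simp [wBlock]

lemma wPrefix_succ (n : ℕ) : wPrefix (n+1) = wPrefix n ++ wBlock n := by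
  unfold wPrefix
  rw [List.range_succ, List.map_append, List.flatten_append]
  simp

lemma length_wPrefix (n : ℕ) : (wPrefix n).length = Sw n := by
  induction n with
  | zero => rfl
  | succ k ih => rw [wPrefix_succ, List.length_append, ih, length_wBlock, Sw_succ]

lemma wPrefix_prefix {m n : ℕ} (h : m ≤ n) : wPrefix m <+: wPrefix n := by
  induction n with
  | zero => simp_all
  | succ k ih =>
    rcases Nat.eq_or_lt_of_le h with rfl | hlt
    · exact List.prefix_refl _
    · exact (ih (by omega)).trans ⟨wBlock k, (wPrefix_succ k).symm⟩

lemma Sw_add_le (i j : ℕ) : Sw (i + j) ≤ Sw i + 5 * j := by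
  induction j with
  | zero => simp
  | succ k ih =>
    have := tm_le_one (i + k)
    rw [show i + (k+1) = (i+k)+1 by omega, Sw_succ]
    omega

lemma le_Sw_add (i j : ℕ) : Sw i + 4 * j ≤ Sw (i + j) := by
  induction j with
  | zero => simp
  | succ k ih =>
    rw [show i + (k+1) = (i+k)+1 by omega, Sw_succ]
    omega

lemma Sw_mono {i j : ℕ} (h : i ≤ j) : Sw i ≤ Sw j := by
  obtain ⟨k, rfl⟩ := Nat.le.dest h
  have := le_Sw_add i k
  omega

lemma Sw_lin (n : ℕ) : 4 * n ≤ Sw n := by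
  have := le_Sw_add 0 n
  simp only [Nat.zero_add] at this
  have h0 : Sw 0 = 0 := rfl
  omega

/-- The infinite word **w** as a function. -/
def W (p : ℕ) : Bool := (wPrefix (p + 1)).getD p false

lemma W_eq {n p : ℕ} (h : p < Sw n) : W p = (wPrefix n).getD p false := by
  unfold W
  have hp1 : p < Sw (p+1) := by have := Sw_lin (p+1); omega
  rcases le_total (p+1) n with hmn | hmn
  · have hpre := wPrefix_prefix hmn
    rw [List.getD_eq_getElem _ _ (by rw [length_wPrefix]; exact hp1),
        List.getD_eq_getElem _ _ (by rw [length_wPrefix]; exact h)]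
    exact hpre.getElem (by rw [length_wPrefix]; exact hp1)
  · have hpre := wPrefix_prefix hmn
    rw [List.getD_eq_getElem _ _ (by rw [length_wPrefix]; exact hp1),
        List.getD_eq_getElem _ _ (by rw [length_wPrefix]; exact h)]
    exact (hpre.getElem (by rw [length_wPrefix]; exact h)).symm

lemma wBlock_getD (i q : ℕ) (hq : q < tm i + 4) : (wBlock i).getD q false = decide (2 ≤ q) := by
  have hb : wBlock i = false :: false :: List.replicate (tm i + 2) true := rfl
  match q with
  | 0 => rw [hb]; rfl
  | 1 => rw [hb]; rfl
  | (n+2) =>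
    rw [hb, List.getD_cons_succ, List.getD_cons_succ,
      List.getD_eq_getElem _ _ (by simp; omega), List.getElem_replicate]
    simp

lemma W_block {i p : ℕ} (h1 : Sw i ≤ p) (h2 : p < Sw (i+1)) : W p = decide (Sw i + 2 ≤ p) := by
  rw [W_eq h2, wPrefix_succ]
  have hlen : (wPrefix i).length = Sw i := length_wPrefix i
  have hq : p - Sw i < tm i + 4 := by rw [Sw_succ] at h2; omega
  rw [List.getD_eq_getElem _ _ (by simp [hlen, length_wBlock]; rw [Sw_succ] at h2; omega),
    List.getElem_append_right (by omega : (wPrefix i).length ≤ p),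
    ← List.getD_eq_getElem _ false (by rw [length_wBlock]; rw [hlen]; exact hq)]
  rw [hlen, wBlock_getD i _ hq]
  simp only [decide_eq_decide]
  omega

lemma existsBlock (p : ℕ) : ∃ i, Sw i ≤ p ∧ p < Sw (i + 1) := by
  induction p with
  | zero => exact ⟨0, by simp [Sw], by rw [Sw_succ]; simp [Sw]⟩
  | succ q ih =>
    obtain ⟨i, h1, h2⟩ := ih
    rcases Nat.lt_or_ge (q+1) (Sw (i+1)) with h | h
    · exact ⟨i, by omega, h⟩
    · refine ⟨i+1, by omega, ?_⟩
      rw [Sw_succ (i+1)]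
      omega

lemma W_start (i : ℕ) : W (Sw i) = false ∧ W (Sw i + 1) = false := by
  have h2 : Sw (i+1) = Sw i + (tm i + 4) := Sw_succ i
  constructor
  · rw [W_block (i := i) (le_refl _) (by omega)]; simp
  · rw [W_block (i := i) (by omega) (by omega)]; simp

lemma pairZero {p : ℕ} (h0 : W p = false) (h1 : W (p+1) = false) : ∃ i, Sw i = p := by
  obtain ⟨i, hb1, hb2⟩ := existsBlock p
  have hW := W_block hb1 hb2
  rw [h0] at hW
  have hple : ¬ (Sw i + 2 ≤ p) := by simpa using hW.symm
  rcases (by omega : p = Sw i ∨ p = Sw i + 1) with h | h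
  · exact ⟨i, h.symm⟩
  · exfalso
    have h2 := W_block (i := i) (p := p+1) (by omega) (by rw [Sw_succ]; omega)
    rw [h1] at h2
    have : ¬ (Sw i + 2 ≤ p + 1) := by simpa using h2.symm
    omega

lemma start_of_false_true {p : ℕ} (h0 : W p = false) (h1 : W (p+1) = true) :
    ∃ j, p = Sw j + 1 := by
  obtain ⟨i, hb1, hb2⟩ := existsBlock p
  have hW := W_block hb1 hb2
  rw [h0] at hW
  have hple : ¬ (Sw i + 2 ≤ p) := by simpa using hW.symm
  rcases (by omega : p = Sw i ∨ p = Sw i + 1) with h | h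
  · exfalso
    have h2 := (W_start i).2
    rw [← h] at h2
    rw [h2] at h1
    exact Bool.false_ne_true h1
  · exact ⟨i, h⟩

lemma no3zeros {p : ℕ} (h0 : W p = false) (h1 : W (p+1) = false) (h2 : W (p+2) = false) :
    False := by
  obtain ⟨j, hj⟩ := pairZero h0 h1
  have hb := W_block (i := j) (p := p+2) (by omega) (by rw [Sw_succ]; omega)
  rw [h2] at hb
  have : ¬ (Sw j + 2 ≤ p + 2) := by simpa using hb.symm
  omega

lemma exists_false_W (p : ℕ) : ∃ q, p ≤ q ∧ q ≤ p + 3 ∧ W q = false := by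
  obtain ⟨i, h1, h2⟩ := existsBlock p
  rcases Nat.lt_or_ge p (Sw i + 2) with h | h
  · refine ⟨p, le_refl _, by omega, ?_⟩
    rw [W_block h1 h2]
    simp
    omega
  · refine ⟨Sw (i+1), by omega, ?_, (W_start (i+1)).1⟩
    have := tm_le_one i
    rw [Sw_succ]
    omega

lemma succStart {i j c : ℕ} (h : Sw j = Sw i + c) (h4 : 4 ≤ c) (h5 : c ≤ 5) :
    j = i + 1 ∧ tm i + 4 = c := by
  have hj : j = i + 1 := by
    rcases Nat.lt_trichotomy j (i+1) with hlt | heq | hgt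
    · exfalso; have := Sw_mono (by omega : j ≤ i); omega
    · exact heq
    · exfalso
      have hle := Sw_mono (by omega : i + 2 ≤ j)
      have := le_Sw_add i 2
      omega
  subst hj
  have := Sw_succ i
  exact ⟨rfl, by omega⟩

section Main

variable {L a : ℕ}

lemma dstep (hper : ∀ p, a ≤ p → p + L < a + 4 * L → W (p + L) = W p)
    (hL2 : 2 ≤ L) {i1 : ℕ} (ha : a ≤ Sw i1) (hb : Sw i1 ≤ a + 4) :
    ∃ d, 1 ≤ d ∧ 4*d ≤ L ∧ L ≤ 5*d ∧ Sw (i1 + d) = Sw i1 + L := by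
  have f0 := (W_start i1).1
  have f1 := (W_start i1).2
  have g0 : W (Sw i1 + L) = false := by rw [hper (Sw i1) ha (by omega)]; exact f0
  have g1 : W (Sw i1 + L + 1) = false := by
    rw [show Sw i1 + L + 1 = Sw i1 + 1 + L by omega, hper (Sw i1 + 1) (by omega) (by omega)]
    exact f1
  obtain ⟨i', hi'⟩ := pairZero g0 g1
  have hlt : i1 < i' := by
    by_contra hcon
    have := Sw_mono (by omega : i' ≤ i1)
    omega
  obtain ⟨d, hd⟩ := Nat.exists_eq_add_of_lt hlt
  refine ⟨d+1, by omega, ?_, ?_, ?_⟩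
  · have := le_Sw_add i1 (d+1)
    rw [show i1 + (d+1) = i1 + d + 1 by omega, ← hd, hi'] at this
    omega
  · have := Sw_add_le i1 (d+1)
    rw [show i1 + (d+1) = i1 + d + 1 by omega, ← hd, hi'] at this
    omega
  · rw [show i1 + (d+1) = i1 + d + 1 by omega, ← hd, hi']

lemma step3 (hper : ∀ p, a ≤ p → p + L < a + 4 * L → W (p + L) = W p)
    (hL2 : 2 ≤ L) {i i' : ℕ} (hai : a ≤ Sw i) (hii' : Sw i' = Sw i + L)
    (hcond : Sw (i+1) + 2 ≤ a + 3*L) :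
    Sw (i'+1) = Sw (i+1) + L ∧ tm i' = tm i := by
  have f0 := (W_start (i+1)).1
  have f1 := (W_start (i+1)).2
  have ha1 : a ≤ Sw (i+1) := le_trans hai (Sw_mono (by omega))
  have g0 : W (Sw (i+1) + L) = false := by
    rw [hper (Sw (i+1)) ha1 (by omega)]; exact f0
  have g1 : W (Sw (i+1) + L + 1) = false := by
    rw [show Sw (i+1) + L + 1 = Sw (i+1) + 1 + L by omega,
      hper (Sw (i+1) + 1) (by omega) (by omega)]
    exact f1
  obtain ⟨i'', hi''⟩ := pairZero g0 g1
  have hsucc : Sw i'' = Sw i' + (tm i + 4) := by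
    have := Sw_succ i
    omega
  obtain ⟨he, htm⟩ := succStart hsucc (by omega) (by have := tm_le_one i; omega)
  subst he
  have h1 := Sw_succ i
  constructor
  · omega
  · omega

lemma mainD2 (hper : ∀ p, a ≤ p → p + L < a + 4 * L → W (p + L) = W p)
    (hL2 : 2 ≤ L) {i1 d : ℕ} (ha : a ≤ Sw i1) (hb : Sw i1 ≤ a + 4)
    (hd2 : 2 ≤ d) (h4d : 4*d ≤ L) (hQ0 : Sw (i1 + d) = Sw i1 + L) : False := by
  have hQ : ∀ j, j ≤ d → Sw (i1 + j + d) = Sw (i1 + j) + L := by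
    intro j
    induction j with
    | zero => intro _; simpa using hQ0
    | succ k ihk =>
      intro hk
      have hprev := ihk (by omega)
      have hcond : Sw (i1 + k + 1) + 2 ≤ a + 3*L := by
        have h1 := Sw_add_le i1 (k+1)
        rw [show i1 + (k+1) = i1 + k + 1 by omega] at h1
        omega
      have hs := step3 hper hL2 (le_trans ha (Sw_mono (by omega))) hprev hcond
      rw [show i1 + (k+1) + d = i1 + k + d + 1 by omega,
          show i1 + (k+1) = i1 + k + 1 by omega]
      exact hs.1
  have htm : ∀ j, j ≤ d → tm (i1 + j) = tm (i1 + j + d) := by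
    intro j hj
    have hcond : Sw (i1 + j + 1) + 2 ≤ a + 3*L := by
      have h1 := Sw_add_le i1 (j+1)
      rw [show i1 + (j+1) = i1 + j + 1 by omega] at h1
      have h2 : 5*(j+1) ≤ 5*(d+1) := by omega
      omega
    have hs := step3 hper hL2 (le_trans ha (Sw_mono (by omega))) (hQ j hj) hcond
    exact hs.2.symm
  exact tm_no_overlap d (by omega) i1 htm

lemma mainD1low (hper : ∀ p, a ≤ p → p + L < a + 4 * L → W (p + L) = W p)
    (hL2 : 2 ≤ L) {i1 : ℕ} (ha : a ≤ Sw i1) (hlow : Sw i1 + 2 ≤ a + L)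
    (hQ0 : Sw (i1 + 1) = Sw i1 + L) : False := by
  have hs1 := step3 hper hL2 ha (by simpa using hQ0) (by omega)
  have hs2 := step3 hper hL2 (le_trans ha (Sw_mono (by omega : i1 ≤ i1 + 1)))
    hs1.1 (by have := Sw_succ (i1+1); have := Sw_succ i1; have := tm_le_one (i1+1); omega)
  refine tm_no_overlap 1 (le_refl _) i1 (fun j hj => ?_)
  interval_cases j
  · simpa using hs1.2.symm
  · rw [show i1 + 1 + 1 = i1 + 2 by omega]
    exact hs2.2.symm

lemma w_core (L a : ℕ) (hL : 1 ≤ L)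
    (hper : ∀ p, a ≤ p → p + L < a + 4 * L → W (p + L) = W p) : False := by
  rcases Nat.lt_or_ge L 2 with hL1 | hL2
  · -- L = 1
    have hL1 : L = 1 := by omega
    subst hL1
    obtain ⟨q, hq1, hq2, hq3⟩ := exists_false_W a
    have e0 : W (a + 1) = W a := hper a (le_refl _) (by omega)
    have e1 : W (a + 2) = W (a + 1) := by
      have := hper (a+1) (by omega) (by omega)
      rwa [show a + 1 + 1 = a + 2 by omega] at this
    have e2 : W (a + 3) = W (a + 2) := by
      have := hper (a+2) (by omega) (by omega)
      rwa [show a + 2 + 1 = a + 3 by omega] at this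
    have h4 : W a = false ∧ W (a+1) = false ∧ W (a+2) = false := by
      rcases (by omega : q = a ∨ q = a + 1 ∨ q = a + 2 ∨ q = a + 3) with rfl | rfl | rfl | rfl <;>
        simp_all
    exact no3zeros h4.1 h4.2.1 h4.2.2
  · -- L ≥ 2
    obtain ⟨i0, hb1, hb2⟩ := existsBlock a
    rcases Nat.eq_or_lt_of_le hb1 with hEq | hNe
    · -- Sw i0 = a : take i1 = i0
      obtain ⟨d, hd1, hd4, hd5, hQ0⟩ := dstep hper hL2 (le_of_eq hEq.symm) (by omega)
      rcases Nat.lt_or_ge d 2 with hd' | hd'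
      · have hd1' : d = 1 := by omega
        subst hd1'
        exact mainD1low hper hL2 (le_of_eq hEq.symm) (by omega) hQ0
      · exact mainD2 hper hL2 (le_of_eq hEq.symm) (by omega) hd' hd4 hQ0
    · -- Sw i0 < a : take i1 = i0 + 1
      have hSi0 : Sw i0 + 1 ≤ a := hNe
      have ha1 : a + 1 ≤ Sw (i0+1) := hb2
      have hb4 : Sw (i0+1) ≤ a + 4 := by
        have := Sw_succ i0; have := tm_le_one i0; omega
      obtain ⟨d, hd1, hd4, hd5, hQ0⟩ := dstep hper hL2 (by omega) hb4
      rcases Nat.lt_or_ge d 2 with hd' | hd'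
      · have hd1' : d = 1 := by omega
        subst hd1'
        -- L ∈ {4, 5}
        rcases Nat.lt_or_ge (Sw (i0+1) + 2) (a + L + 1) with hlow | hhigh
        · exact mainD1low hper hL2 (by omega) (by omega) hQ0
        · -- high: a + L ≤ Sw (i0+1) + 1,  4 ≤ L ≤ 5
          rcases (by omega : Sw i0 + 1 = a ∨ Sw i0 + 2 ≤ a) with hA | hB
          · -- case A
            have hWa : W a = false := by
              have := (W_start i0).2; rwa [hA] at this
            have hWa1 : W (a+1) = true := by
              rw [W_block (i := i0) (by omega) (by omega)]
              simp
              omega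
            have f1 : W (a + L) = false := by rw [hper a (le_refl _) (by omega)]; exact hWa
            have t1 : W (a + 1 + L) = true := by
              rw [hper (a+1) (by omega) (by omega)]; exact hWa1
            have f2 : W (a + 2*L) = false := by
              have := hper (a + L) (by omega) (by omega)
              rw [show a + L + L = a + 2*L by omega] at this
              rw [this]; exact f1
            have t2 : W (a + 1 + 2*L) = true := by
              have := hper (a + 1 + L) (by omega) (by omega)
              rw [show a + 1 + L + L = a + 1 + 2*L by omega] at this
              rw [this]; exact t1
            have f3 : W (a + 3*L) = false := by
              have := hper (a + 2*L) (by omega) (by omega)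
              rw [show a + 2*L + L = a + 3*L by omega] at this
              rw [this]; exact f2
            have t3 : W (a + 1 + 3*L) = true := by
              have := hper (a + 1 + 2*L) (by omega) (by omega)
              rw [show a + 1 + 2*L + L = a + 1 + 3*L by omega] at this
              rw [this]; exact t2
            obtain ⟨j1, hj1⟩ := start_of_false_true f1
              (by rw [show a + L + 1 = a + 1 + L by omega]; exact t1)
            obtain ⟨j2, hj2⟩ := start_of_false_true f2
              (by rw [show a + 2*L + 1 = a + 1 + 2*L by omega]; exact t2)
            obtain ⟨j3, hj3⟩ := start_of_false_true f3
              (by rw [show a + 3*L + 1 = a + 1 + 3*L by omega]; exact t3)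
            obtain ⟨he1, htm1⟩ := succStart (c := L) (i := i0) (j := j1) (by omega) (by omega) (by omega)
            obtain ⟨he2, htm2⟩ := succStart (c := L) (i := j1) (j := j2) (by omega) (by omega) (by omega)
            obtain ⟨he3, htm3⟩ := succStart (c := L) (i := j2) (j := j3) (by omega) (by omega) (by omega)
            subst he1; subst he2
            refine tm_no_overlap 1 (le_refl _) i0 (fun j hj => ?_)
            interval_cases j
            · simp only [Nat.add_zero]; omega
            · rw [show i0 + 1 + 1 = i0 + 1 + 1 by rfl]; omega
          · -- case B
            have hb5 : Sw (i0+1) ≤ a + 3 := by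
              have := Sw_succ i0; have := tm_le_one i0; omega
            have hL4 : L = 4 := by omega
            have hS1 : Sw (i0+1) = a + 3 := by omega
            have hWa : W a = true := by
              rw [W_block (i := i0) (by omega) (by omega)]
              simp
              omega
            have hWa4 : W (a + 4) = false := by
              have := (W_start (i0+1)).2
              rwa [hS1, show a + 3 + 1 = a + 4 by omega] at this
            have := hper a (le_refl _) (by omega)
            rw [hL4] at this
            rw [hWa4, hWa] at this
            exact Bool.false_ne_true this
      · exact mainD2 hper hL2 (by omega) hb4 hd' hd4 hQ0

end Main

theorem stmt6 (x : List Bool) (hx : x ≠ []) :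
    ¬ IsFactorW (x ++ x ++ x ++ x) := by
  rintro ⟨n, s, t, hst⟩
  set L := x.length with hLdef
  have hL : 1 ≤ L := by
    rw [hLdef]
    exact List.length_pos_iff.mpr hx
  set a := s.length with hadef
  have hX4 : (x ++ x ++ x ++ x).length = 4 * L := by simp [hLdef]; omega
  have hpre : (s ++ (x ++ x ++ x ++ x)) <+: wPrefix n := ⟨t, by rw [← hst]⟩
  have hlenn : a + 4 * L ≤ Sw n := by
    have hl := congrArg List.length hst
    rw [length_wPrefix] at hl
    simp [hLdef, hadef] at hl
    omega
  have hgetW : ∀ o, o < 4 * L → W (a + o) = (x ++ x ++ x ++ x).getD o false := by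
    intro o ho
    have h1 : a + o < Sw n := by omega
    rw [W_eq h1]
    have hplen : a + o < (s ++ (x ++ x ++ x ++ x)).length := by
      simp [hX4]
      omega
    rw [List.getD_eq_getElem _ _ (by rw [length_wPrefix]; exact h1),
      ← hpre.getElem hplen,
      List.getElem_append_right (by omega : s.length ≤ a + o),
      ← List.getD_eq_getElem _ false (by omega)]
    congr 1
    omega
  have hperiodic : ∀ o, o < 3 * L →
      (x ++ x ++ x ++ x).getD (o + L) false = (x ++ x ++ x ++ x).getD o false := by
    intro o ho
    have hA : (x ++ x ++ x).length = 3 * L := by simp [hLdef]; omega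
    have h4 : x ++ x ++ x ++ x = x ++ (x ++ x ++ x) := by simp [List.append_assoc]
    have lhs : (x ++ x ++ x ++ x).getD (o + L) false = (x ++ x ++ x).getD o false := by
      rw [h4, List.getD_eq_getElem _ _ (by simp [hLdef]; omega),
        List.getElem_append_right (by omega : x.length ≤ o + L),
        ← List.getD_eq_getElem _ false (by omega)]
      congr 1
      omega
    have rhs : (x ++ x ++ x ++ x).getD o false = (x ++ x ++ x).getD o false := by
      rw [List.getD_eq_getElem _ _ (by simp [hLdef]; omega),
        List.getElem_append_left (by omega : o < (x ++ x ++ x).length),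
        ← List.getD_eq_getElem _ false (by omega)]
    rw [lhs, rhs]
  refine w_core L a hL (fun p hp1 hp2 => ?_)
  obtain ⟨o, rfl⟩ : ∃ o, p = a + o := ⟨p - a, by omega⟩
  have h1 : W (a + o + L) = (x ++ x ++ x ++ x).getD (o + L) false := by
    have := hgetW (o + L) (by omega)
    rwa [show a + (o + L) = a + o + L by omega] at this
  rw [h1, hperiodic o (by omega), ← hgetW o (by omega)]
end

section
/- Let w = ∏_{i≥0} 0²1^{t_i+2}, where t_i is the Thue–Morse sequence. Then for every morphic involution g of {0,1}* (i.e., g induced by a permutation of {0,1} of order dividing 2), w contains no factor of the form x·x·g(x)·x with x nonempty. -/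
/-!
Cut `w` into its blocks `0 0 1^(t_i+2)`, the `i`-th one starting at position `S i`. The factor `00`
occurs in `w` only at block starts, so a shift by `n` that preserves a long enough factor of `w`
sends block starts to block starts and blocks to blocks of the same length, i.e. of the same
Thue–Morse type.

For `g = id`, a factor `x⁴` with `|x| ≥ 5` thus forces an overlap in `t`, which is overlap-free.
For `g` the swap, `x · g(x) · x` makes `w` antiperiodic over `3|x|` letters; a block `00111`
would be mapped onto `000`, which `w` avoids, so three consecutive blocks there have type `0`,
a cube in `t`.
The words `x` of length at most `5` are settled by enumerating the windows of `|x| + 1`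
consecutive blocks.
-/

section ThueMorse

open Finset

theorem tm_lt_two (i : ℕ) : tm i < 2 := Nat.mod_lt _ two_pos

theorem tm_two_mul_add (a r : ℕ) (hr : r < 2) : tm (2 * a + r) = (tm a + r) % 2 := by
  rcases Nat.eq_zero_or_pos (a + r) with h | h
  · obtain ⟨rfl, rfl⟩ : a = 0 ∧ r = 0 := by omega
    rfl
  · unfold tm
    rw [add_comm, Nat.digits_add 2 one_lt_two r a hr (by omega), List.sum_cons]
    omega

theorem sum_range_tm_two_mul (e q : ℕ) : ∑ j ∈ range (2 * q), tm (2 * e + j) = q := by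
  induction q with
  | zero => simp
  | succ q ih =>
    have hpair := tm_two_mul_add (e + q) 0 (by norm_num)
    have hpair' := tm_two_mul_add (e + q) 1 (by norm_num)
    have := tm_lt_two (e + q)
    rw [show 2 * (q + 1) = 2 * q + 1 + 1 by ring, sum_range_succ, sum_range_succ, ih,
      show 2 * e + (2 * q + 1) = 2 * (e + q) + 1 by ring,
      show 2 * e + 2 * q = 2 * (e + q) + 0 by ring]
    omega

/-- Summed over `2p` letters from an even position, `t` gives `p` (its aligned letter pairs are
complementary), while periodicity makes that sum even; so `p = 2q`, and
`t (2a + r) = (t a + r) % 2` halves the overlap. -/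
theorem tm_not_overlap (p : ℕ) (hp : 0 < p) (k : ℕ) :
    ¬ ∀ j ≤ p, tm (k + j) = tm (k + j + p) := by
  induction p using Nat.strong_induction_on generalizing k with
  | _ p ih =>
  intro h
  obtain ⟨q, rfl⟩ : Even p := by
    set e := (k + 1) / 2
    have hsum := sum_range_tm_two_mul e p
    rw [two_mul, sum_range_add, show 2 * e = k + (2 * e - k) by omega] at hsum
    have hshift : ∑ j ∈ range p, tm (k + (2 * e - k) + (p + j)) =
        ∑ j ∈ range p, tm (k + (2 * e - k) + j) := by
      refine sum_congr rfl fun j hj => ?_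
      have hj : j < p := mem_range.mp hj
      convert (h (2 * e - k + j) (by omega)).symm using 2 <;> omega
    exact ⟨_, hshift ▸ hsum.symm⟩
  refine ih q (by omega) (by omega) (k / 2) fun j hj => ?_
  have hk := h (2 * j) (by omega)
  rw [show k + 2 * j = 2 * (k / 2 + j) + k % 2 by omega,
    show 2 * (k / 2 + j) + k % 2 + (q + q) = 2 * (k / 2 + j + q) + k % 2 by omega,
    tm_two_mul_add _ _ (Nat.mod_lt _ two_pos), tm_two_mul_add _ _ (Nat.mod_lt _ two_pos)] at hk
  have := tm_lt_two (k / 2 + j)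
  have := tm_lt_two (k / 2 + j + q)
  omega

theorem tm_not_three_eq (k : ℕ) : ¬ (tm k = tm (k + 1) ∧ tm (k + 1) = tm (k + 2)) := by
  rintro ⟨h₀, h₁⟩
  refine tm_not_overlap 1 one_pos k fun j hj => ?_
  interval_cases j <;> assumption

end ThueMorse

theorem List.take_drop_map_range' {α : Type*} (f : ℕ → α) {a k d L : ℕ} (h : d + L ≤ k) :
    (((List.range' a k).map f).drop d).take L = (List.range' (a + d) L).map f := by
  rw [← List.map_drop, ← List.map_take, List.drop_range',
    List.take_range'_of_length_ge (by omega)]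
  simp

theorem List.IsInfix.exists_eq_map_range' {α : Type*} {f : ℕ → α} {l : List α} {a k : ℕ}
    (h : l <:+: (List.range' a k).map f) : ∃ s, l = (List.range' s l.length).map f := by
  obtain ⟨p, q, hpq⟩ := h
  have hlen := congrArg List.length hpq
  simp only [List.length_append, List.length_map, List.length_range'] at hlen
  refine ⟨a + p.length, ?_⟩
  rw [← List.take_drop_map_range' f (a := a) (d := p.length) (k := k) (by omega), ← hpq]
  simp

theorem apply_eq_of_map_range'_eq {α : Type*} {f g : ℕ → α} {a b L : ℕ}
    (h : (List.range' a L).map f = (List.range' b L).map g) {j : ℕ} (hj : j < L) :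
    f (a + j) = g (b + j) := by
  simpa [List.getElem?_range', hj] using congrArg (·[j]?) h

theorem apply_add_length_eq_of_pow_four {α : Type*} {f : ℕ → α} {x : List α} {s L : ℕ}
    (h : x ++ x ++ x ++ x = (List.range' s L).map f) {m : ℕ} (hm₁ : s ≤ m)
    (hm₂ : m < s + 3 * x.length) : f (m + x.length) = f m := by
  have hL := congrArg List.length h
  simp only [List.length_append, List.length_map, List.length_range'] at hL
  have hx₃ : (x ++ x ++ x).length = 3 * x.length := by
    simp only [List.length_append]; omega
  have hshifted : (List.range' (s + x.length) (3 * x.length)).map f = x ++ x ++ x := by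
    rw [← List.take_drop_map_range' f (k := L) (by omega), ← h, List.append_assoc,
      List.append_assoc, List.drop_left' rfl, ← List.append_assoc, List.take_of_length_le hx₃.le]
  have hunshifted : (List.range' (s + 0) (3 * x.length)).map f = x ++ x ++ x := by
    rw [← List.take_drop_map_range' f (k := L) (by omega), ← h, List.drop_zero, List.take_left' hx₃]
  have := apply_eq_of_map_range'_eq (hshifted.trans hunshifted.symm) (j := m - s) (by omega)
  rwa [show s + x.length + (m - s) = m + x.length by omega, show s + 0 + (m - s) = m by omega]
    at this

theorem apply_add_length_eq_of_append {α : Type*} {f : ℕ → α} {g : α → α}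
    (hg : Function.Involutive g) {x : List α} {s L : ℕ}
    (h : x ++ x ++ x.map g ++ x = (List.range' s L).map f) {m : ℕ} (hm₁ : s + x.length ≤ m)
    (hm₂ : m < s + 3 * x.length) : f (m + x.length) = g (f m) := by
  have hL := congrArg List.length h
  simp only [List.length_append, List.length_map, List.length_range'] at hL
  have hlast : (List.range' (s + 2 * x.length) (2 * x.length)).map f = x.map g ++ x := by
    rw [← List.take_drop_map_range' f (k := L) (by omega), ← h, List.append_assoc,
      List.drop_left' (by simp only [List.length_append]; omega),
      List.take_of_length_le (by simp only [List.length_append, List.length_map]; omega)]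
  have hmiddle : (List.range' (s + x.length) (2 * x.length)).map (g ∘ f) = x.map g ++ x := by
    rw [← List.map_map, ← List.take_drop_map_range' f (k := L) (by omega), ← h,
      List.append_assoc, List.append_assoc, List.drop_left' rfl, ← List.append_assoc,
      List.take_left' (by simp only [List.length_append, List.length_map]; omega)]
    simp [hg.comp_self]
  have := apply_eq_of_map_range'_eq (hlast.trans hmiddle.symm) (j := m - s - x.length) (by omega)
  rwa [show s + 2 * x.length + (m - s - x.length) = m + x.length by omega,
    show s + x.length + (m - s - x.length) = m by omega] at this

def blockStart : ℕ → ℕ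
  | 0 => 0
  | i + 1 => blockStart i + (tm i + 4)

/-- `w` has a `0` exactly at the positions `S i` and `S i + 1`; the bound `i ≤ m` keeps this
decidable and loses nothing since `i ≤ S i`. -/
def wLetter (m : ℕ) : Bool := decide (∀ i ≤ m, m ≠ blockStart i ∧ m ≠ blockStart i + 1)

section Blocks

local notation "S" => blockStart
local notation "W" => wLetter

@[simp] theorem blockStart_zero : S 0 = 0 := rfl

theorem blockStart_succ (i : ℕ) : S (i + 1) = S i + (tm i + 4) := rfl

theorem blockStart_strictMono : StrictMono blockStart :=
  strictMono_nat_of_lt_succ fun i => by rw [blockStart_succ]; omega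

theorem blockStart_add_le_succ (i : ℕ) : S i + 4 ≤ S (i + 1) := by
  rw [blockStart_succ]; omega

theorem blockStart_succ_le (i : ℕ) : S (i + 1) ≤ S i + 5 := by
  have := tm_lt_two i; rw [blockStart_succ]; omega

theorem blockStart_add_four_mul_le (i k : ℕ) : S i + 4 * k ≤ S (i + k) := by
  induction k with
  | zero => simp
  | succ k ih => have := blockStart_add_le_succ (i + k); rw [← add_assoc]; omega

theorem exists_blockStart_le_lt (m : ℕ) : ∃ i, S i ≤ m ∧ m < S (i + 1) := by
  induction m with
  | zero => exact ⟨0, le_rfl, blockStart_strictMono (Nat.lt_succ_self 0)⟩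
  | succ m ih =>
    obtain ⟨i, h₁, h₂⟩ := ih
    rcases (Nat.succ_le_of_lt h₂).lt_or_eq with h | h
    · exact ⟨i, by omega, h⟩
    · exact ⟨i + 1, h.ge, by have := blockStart_add_le_succ (i + 1); omega⟩

theorem exists_blockStart_mem_Icc (m : ℕ) : ∃ i, m ≤ S i ∧ S i ≤ m + 4 := by
  obtain ⟨i, h₁, h₂⟩ := exists_blockStart_le_lt m
  rcases h₁.eq_or_lt with h | h
  · exact ⟨i, h.ge, by omega⟩
  · exact ⟨i + 1, h₂.le, by have := blockStart_succ_le i; omega⟩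

theorem wLetter_eq_false_iff (m : ℕ) : W m = false ↔ ∃ i, m = S i ∨ m = S i + 1 := by
  simp only [wLetter, decide_eq_false_iff_not, not_forall, not_and_or, not_ne_iff]
  constructor
  · rintro ⟨i, -, h⟩; exact ⟨i, h⟩
  · rintro ⟨i, h⟩; exact ⟨i, by have : i ≤ S i := blockStart_strictMono.le_apply; omega, h⟩

theorem wLetter_blockStart (i : ℕ) : W (S i) = false :=
  (wLetter_eq_false_iff _).2 ⟨i, .inl rfl⟩

theorem wLetter_blockStart_add_one (i : ℕ) : W (S i + 1) = false :=
  (wLetter_eq_false_iff _).2 ⟨i, .inr rfl⟩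

theorem wLetter_of_lt_blockStart_succ {i m : ℕ} (h₁ : S i + 2 ≤ m) (h₂ : m < S (i + 1)) :
    W m = true := by
  rw [← Bool.not_eq_false, wLetter_eq_false_iff]
  rintro ⟨j, hj⟩
  rcases lt_or_ge j (i + 1) with h | h
  · have := blockStart_strictMono.monotone (Nat.le_of_lt_succ h); omega
  · have := blockStart_strictMono.monotone h; omega

theorem exists_blockStart_eq_of_wLetter_false {m : ℕ} (h₀ : W m = false)
    (h₁ : W (m + 1) = false) : ∃ i, S i = m := by
  obtain ⟨i, rfl | rfl⟩ := (wLetter_eq_false_iff m).1 h₀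
  · exact ⟨i, rfl⟩
  · rw [wLetter_of_lt_blockStart_succ le_rfl (by have := blockStart_add_le_succ i; omega)] at h₁
    cases h₁

theorem wLetter_add_two_of_wLetter_false {m : ℕ} (h₀ : W m = false) (h₁ : W (m + 1) = false) :
    W (m + 2) = true := by
  obtain ⟨i, rfl⟩ := exists_blockStart_eq_of_wLetter_false h₀ h₁
  exact wLetter_of_lt_blockStart_succ le_rfl (by have := blockStart_add_le_succ i; omega)

theorem wBlock_eq_map_range' (i : ℕ) : wBlock i = (List.range' (S i) (tm i + 4)).map W := by
  have hones : (List.range' (S i + 2) (tm i + 2)).map W = List.replicate (tm i + 2) true := by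
    refine List.eq_replicate_iff.2 ⟨by simp, fun b hb => ?_⟩
    obtain ⟨m, hm, rfl⟩ := List.mem_map.1 hb
    rw [List.mem_range'_1] at hm
    exact wLetter_of_lt_blockStart_succ (i := i) (by omega) (by rw [blockStart_succ]; omega)
  have hsplit : List.range' (S i) (tm i + 4) =
      S i :: (S i + 1) :: List.range' (S i + 2) (tm i + 2) := by
    simp [List.range'_succ]
  rw [wBlock, ← hones, hsplit, List.map_cons, List.map_cons, wLetter_blockStart,
    wLetter_blockStart_add_one]
  rfl

theorem flatten_map_wBlock (i K : ℕ) :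
    ((List.range' i K).map wBlock).flatten = (List.range' (S i) (S (i + K) - S i)).map W := by
  induction K generalizing i with
  | zero => simp
  | succ K ih =>
    have hmono := blockStart_strictMono.monotone (show i + 1 ≤ i + (K + 1) by omega)
    rw [List.range'_succ, List.map_cons, List.flatten_cons, ih, wBlock_eq_map_range',
      ← List.map_append, blockStart_succ, List.range'_append_1,
      show i + 1 + K = i + (K + 1) by omega]
    congr 2
    rw [blockStart_succ] at hmono
    omega

theorem wPrefix_eq_map (n : ℕ) : wPrefix n = (List.range' 0 (S n)).map W := by
  simpa [wPrefix, List.range_eq_range'] using flatten_map_wBlock 0 n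

theorem IsFactorW.exists_eq_map {u : List Bool} (h : IsFactorW u) :
    ∃ s, u = (List.range' s u.length).map W := by
  obtain ⟨N, hN⟩ := h
  rw [wPrefix_eq_map] at hN
  exact hN.exists_eq_map_range'

theorem blockStart_succ_add_of_periodic {n i i' : ℕ}
    (hper : ∀ m, S i ≤ m → m ≤ S (i + 1) → W (m + n) = W m) (h : S i' = S i + n) :
    S (i' + 1) = S (i + 1) + n := by
  have hi := blockStart_add_le_succ i
  have hi' := blockStart_add_le_succ i'
  rcases lt_trichotomy (S (i' + 1)) (S (i + 1) + n) with hlt | heq | hgt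
  · have hW := hper (S (i' + 1) - n) (by omega) (by omega)
    rw [Nat.sub_add_cancel (by omega), wLetter_blockStart,
      wLetter_of_lt_blockStart_succ (i := i) (by omega) (by omega)] at hW
    cases hW
  · exact heq
  · have hW := hper (S (i + 1)) (by omega) le_rfl
    rw [wLetter_blockStart, wLetter_of_lt_blockStart_succ (i := i') (by omega) hgt] at hW
    cases hW

theorem exists_blockStart_eq_add_of_periodic {n i : ℕ}
    (hper : ∀ m, S i ≤ m → m ≤ S i + 1 → W (m + n) = W m) : ∃ i', S i' = S i + n :=
  exists_blockStart_eq_of_wLetter_false (by rw [hper _ le_rfl (by omega), wLetter_blockStart])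
    (by rw [add_right_comm, hper _ (by omega) le_rfl, wLetter_blockStart_add_one])

theorem not_wLetter_periodic {s n : ℕ} (hn : 5 ≤ n) :
    ¬ ∀ m, s ≤ m → m < s + 3 * n → W (m + n) = W m := by
  intro hper
  obtain ⟨i₀, hs, hi₀⟩ := exists_blockStart_mem_Icc s
  obtain ⟨i₁, hi₁⟩ := exists_blockStart_eq_add_of_periodic (n := n) (i := i₀)
    fun m h₁ h₂ => hper m (by omega) (by omega)
  obtain ⟨p, rfl⟩ : ∃ p, i₁ = i₀ + p :=
    ⟨i₁ - i₀, by have := blockStart_strictMono.lt_iff_lt.1 (show S i₀ < S i₁ by omega); omega⟩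
  have hp : 0 < p := Nat.pos_of_ne_zero fun h => by subst h; rw [add_zero] at hi₁; omega
  have hend : S (i₀ + p + 1) ≤ S i₀ + n + 5 := by have := blockStart_succ_le (i₀ + p); omega
  have hshift : ∀ j ≤ p + 1, S (i₀ + p + j) = S (i₀ + j) + n := by
    intro j hj
    induction j with
    | zero => simpa using hi₁
    | succ j ih =>
      rw [← add_assoc, ← add_assoc]
      refine blockStart_succ_add_of_periodic (fun m h₁ h₂ => hper m ?_ ?_) (ih (by omega))
      · have := blockStart_strictMono.monotone (show i₀ ≤ i₀ + j by omega); omega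
      · have := blockStart_strictMono.monotone (show i₀ + j + 1 ≤ i₀ + p + 1 by omega); omega
  refine tm_not_overlap p hp i₀ fun j hj => ?_
  have h₁ := hshift j (by omega)
  have h₂ := hshift (j + 1) (by omega)
  rw [← add_assoc, ← add_assoc, blockStart_succ, blockStart_succ, h₁] at h₂
  rw [add_right_comm]
  omega

theorem not_wLetter_antiperiodic {s n : ℕ} (hn : 6 ≤ n) :
    ¬ ∀ m, s + n ≤ m → m < s + 3 * n → W (m + n) = !W m := by
  intro hanti
  have hback : ∀ m, s + 2 * n ≤ m → m < s + 4 * n → W (m - n) = !W m := by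
    intro m h₁ h₂
    rw [← Nat.sub_add_cancel (show n ≤ m by omega), hanti (m - n) (by omega) (by omega),
      Bool.not_not, Nat.add_sub_cancel]
  have hflip : ∀ m, s + n ≤ m → m + 2 < s + 4 * n → ∃ t, ∀ j ≤ 2, W (t + j) = !W (m + j) := by
    intro m h₁ h₂
    by_cases hfwd : m + 2 < s + 3 * n
    · exact ⟨m + n, fun j hj => by rw [add_right_comm, hanti _ (by omega) (by omega)]⟩
    · exact ⟨m - n, fun j hj => by
        rw [show m - n + j = m + j - n by omega, hback _ (by omega) (by omega)]⟩
  have htm : ∀ b, s + n ≤ S b + 2 → S b + 4 < s + 4 * n → tm b = 0 := by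
    intro b h₁ h₂
    by_contra hb
    have hsucc : S (b + 1) = S b + 5 := by have := tm_lt_two b; rw [blockStart_succ]; omega
    obtain ⟨t, ht⟩ := hflip (S b + 2) h₁ h₂
    have hones : ∀ j ≤ 2, W (t + j) = false := fun j hj => by
      rw [ht j hj, wLetter_of_lt_blockStart_succ (i := b) (by omega) (by omega)]; rfl
    have := wLetter_add_two_of_wLetter_false (hones 0 (by omega)) (hones 1 (by omega))
    rw [hones 2 le_rfl] at this
    cases this
  obtain ⟨i, hi₁, hi₂⟩ := exists_blockStart_mem_Icc (s + n)
  have h₀ := htm i (by omega) (by omega)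
  have h₁ := htm (i + 1) (by rw [blockStart_succ]; omega) (by rw [blockStart_succ, h₀]; omega)
  have h₂ := htm (i + 2) (by have := blockStart_strictMono (show i < i + 2 by omega); omega)
    (by rw [blockStart_succ, h₁, blockStart_succ, h₀]; omega)
  exact tm_not_three_eq i ⟨h₀.trans h₁.symm, h₁.trans h₂.symm⟩

theorem not_isFactorW_pow_four {x : List Bool} (hx : 5 ≤ x.length) :
    ¬ IsFactorW (x ++ x ++ x ++ x) := fun h =>
  let ⟨_, hs⟩ := h.exists_eq_map
  not_wLetter_periodic hx fun _ h₁ h₂ => apply_add_length_eq_of_pow_four hs h₁ h₂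

theorem not_isFactorW_append_map_not {x : List Bool} (hx : 6 ≤ x.length) :
    ¬ IsFactorW (x ++ x ++ x.map not ++ x) := fun h =>
  let ⟨_, hs⟩ := h.exists_eq_map
  not_wLetter_antiperiodic hx fun _ h₁ h₂ =>
    apply_add_length_eq_of_append Bool.involutive_not hs h₁ h₂

def blockWord (ts : List ℕ) : List Bool :=
  (ts.map fun t => [false, false] ++ List.replicate (t + 2) true).flatten

theorem blockWord_map_tm (i K : ℕ) :
    blockWord ((List.range' i K).map tm) = (List.range' (S i) (S (i + K) - S i)).map W := by
  rw [← flatten_map_wBlock, blockWord, List.map_map]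
  rfl

theorem map_tm_mem_sections (i K : ℕ) :
    (List.range' i K).map tm ∈ (List.replicate K [0, 1]).sections := by
  induction K generalizing i with
  | zero => simp
  | succ K ih =>
    rw [List.range'_succ, List.map_cons, List.replicate_succ, List.mem_sections, List.forall₂_cons,
      ← List.mem_sections]
    exact ⟨by have := tm_lt_two i; simp only [List.mem_cons, List.not_mem_nil, or_false]; omega,
      ih (i + 1)⟩

theorem not_triple_infix_map_tm (a i K : ℕ) : ¬ [a, a, a] <:+: (List.range' i K).map tm := by
  intro h
  obtain ⟨t, ht⟩ := h.exists_eq_map_range'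
  obtain ⟨rfl, h₁, h₂⟩ : tm t = a ∧ tm (t + 1) = a ∧ tm (t + 2) = a := by
    simpa [List.range'_succ, eq_comm] using ht
  exact tm_not_three_eq t ⟨h₁.symm, h₁.trans h₂.symm⟩

/-- The short cases, by computation: a factor of length `4n` starting in block `i` lies in the
blocks `i, …, i + n`, whose types form a binary word without a cube of a letter. -/
theorem blockWord_pattern_free :
    ∀ n ∈ [1, 2, 3, 4, 5], ∀ g ∈ [id, List.map not],
      ∀ ts ∈ (List.replicate (n + 1) [0, 1]).sections, ¬ [0, 0, 0] <:+: ts → ¬ [1, 1, 1] <:+: ts →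
      ∀ d < (blockWord ts).length, let u := (blockWord ts).drop d;
        u.take (4 * n) ≠ u.take n ++ u.take n ++ g (u.take n) ++ u.take n := by
  decide

theorem not_isFactorW_of_length_le_five {x : List Bool} {g : List Bool → List Bool} (hx : x ≠ [])
    (h5 : x.length ≤ 5) (hg : g = id ∨ g = List.map not) : ¬ IsFactorW (x ++ x ++ g x ++ x) := by
  intro hfac
  set n := x.length
  have hn : 0 < n := List.length_pos_iff.2 hx
  have hgx : (g x).length = n := by rcases hg with rfl | rfl <;> simp [n]
  obtain ⟨s, hs⟩ := hfac.exists_eq_map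
  rw [show (x ++ x ++ g x ++ x).length = 4 * n by simp only [List.length_append, hgx]; omega] at hs
  obtain ⟨i, hi₁, hi₂⟩ := exists_blockStart_le_lt s
  have hcover : S (i + 1) + 4 * n ≤ S (i + (n + 1)) := by
    rw [show i + (n + 1) = i + 1 + n by omega]; exact blockStart_add_four_mul_le (i + 1) n
  set v := blockWord ((List.range' i (n + 1)).map tm) with hv
  have hwindow : (v.drop (s - S i)).take (4 * n) = x ++ x ++ g x ++ x := by
    rw [hv, blockWord_map_tm, List.take_drop_map_range' _ (by omega), hs, Nat.add_sub_cancel' hi₁]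
  have hprefix : (v.drop (s - S i)).take n = x := by
    have := congrArg (List.take n) hwindow
    rwa [List.take_take, min_eq_left (by omega), List.append_assoc, List.append_assoc,
      List.take_left' rfl] at this
  refine blockWord_pattern_free n ?_ g ?_ _ (map_tm_mem_sections i (n + 1))
    (not_triple_infix_map_tm 0 i _) (not_triple_infix_map_tm 1 i _) (s - S i) ?_ ?_
  · simp only [List.mem_cons, List.not_mem_nil, or_false]; omega
  · rcases hg with rfl | rfl <;> simp
  · rw [blockWord_map_tm, List.length_map, List.length_range']; omega
  · rw [← hv]; simp only [hprefix, hwindow]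

end Blocks

theorem stmt8 (x : List Bool) (hx : x ≠ []) (g : List Bool → List Bool)
    (hg : (∀ l, g l = l) ∨ (∀ l, g l = l.map (fun b => !b))) :
    ¬ IsFactorW (x ++ x ++ g x ++ x) := by
  have hg' : g = id ∨ g = List.map not := hg.imp funext funext
  rcases le_or_gt x.length 5 with hsmall | hlarge
  · exact not_isFactorW_of_length_le_five hx hsmall hg'
  · rcases hg' with rfl | rfl
    · exact not_isFactorW_pow_four hlarge.le
    · exact not_isFactorW_append_map_not hlarge
end

section
/- Let v = ∏_{i≥0} 0·1^{2t_i+1}, where t_i is the Thue–Morse sequence. Then v contains no factor of the form x̄·x·x·x̄, where x is a nonempty binary word and x̄ is its letterwise complement. -/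
/-- Block `0 1^(2 t_i+1)` of the word **v**. -/
def vBlock (i : Nat) : List Bool := [false] ++ List.replicate (2 * tm i + 1) true

def vPrefix (n : Nat) : List Bool := ((List.range n).map vBlock).flatten

/-- `L` is a factor of the infinite word **v**. -/
def IsFactorV (L : List Bool) : Prop := ∃ n, L <:+: vPrefix n

/-!
Every block `0 1^(2 t_i + 1)` has even length and carries `1` at each of its odd positions, so
**v** has a `1` at every odd position, and every factor of **v** has a `1` at every position of
some fixed parity `p`. In `x̄ x x x̄` with `n = |x|`, the letters at positions `i` and `2n + i` are
complementary, as are those at `n + i` and `3n + i`; one of each pair is `0`, so neither `i` nor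
`n + i` has parity `p`, for every `i < n`. Taking `i = 0` forces `n` to be even, and then `i = 1`
gives the contradiction. Only the parity of the block lengths matters, not the Thue–Morse
sequence.
-/

def TrueAtParity (p : ℕ) (L : List Bool) : Prop :=
  ∀ i (hi : i < L.length), i % 2 = p % 2 → L[i] = true

namespace TrueAtParity

theorem of_mod_two_eq {p q : ℕ} {L : List Bool} (h : TrueAtParity p L) (hpq : p % 2 = q % 2) :
    TrueAtParity q L := fun i hi hiq => h i hi (hiq.trans hpq.symm)

theorem append_iff {p : ℕ} {A B : List Bool} :
    TrueAtParity p (A ++ B) ↔ TrueAtParity p A ∧ TrueAtParity (p + A.length) B := by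
  constructor
  · intro h
    refine ⟨fun i hi hip => ?_, fun i hi hip => ?_⟩
    · rw [List.getElem_append_left' hi B]
      exact h i (by simp; omega) hip
    · rw [List.getElem_append_right' A hi]
      exact h (i + A.length) (by simp; omega) (by omega)
  · rintro ⟨hA, hB⟩ i hi hip
    rw [List.getElem_append]
    split_ifs with hiA
    · exact hA i hiA hip
    · exact hB (i - A.length) (by simp at hi; omega) (by omega)

theorem flatten {p : ℕ} {Bs : List (List Bool)}
    (h : ∀ B ∈ Bs, Even B.length ∧ TrueAtParity p B) : TrueAtParity p Bs.flatten := by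
  induction Bs with
  | nil => exact fun _ hi => absurd hi (Nat.not_lt_zero _)
  | cons B Bs ih =>
    obtain ⟨⟨k, hk⟩, hB⟩ := h B List.mem_cons_self
    rw [List.flatten_cons, append_iff]
    exact ⟨hB, (ih fun B' hB' => h B' (List.mem_cons_of_mem B hB')).of_mod_two_eq (by omega)⟩

theorem exists_of_infix {p : ℕ} {L V : List Bool} (hV : TrueAtParity p V) (hLV : L <:+: V) :
    ∃ q, TrueAtParity q L := by
  obtain ⟨s, t, rfl⟩ := hLV
  exact ⟨_, (append_iff.mp (append_iff.mp hV).1).2⟩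

theorem mod_two_ne_of_map_not {p q : ℕ} {x : List Bool} (hx : TrueAtParity p x)
    (hx' : TrueAtParity q (x.map not)) (hpq : p % 2 = q % 2) :
    ∀ i < x.length, i % 2 ≠ p % 2 := fun i hi hip => by
  have h₁ := hx i hi hip
  have h₂ := hx' i (by simpa using hi) (hip.trans hpq)
  simp [h₁] at h₂

end TrueAtParity

theorem trueAtParity_one_cons_replicate (m : ℕ) :
    TrueAtParity 1 (false :: List.replicate m true) := by
  rintro (_ | i) hi hip
  · simp at hip
  · simp

theorem trueAtParity_vPrefix (n : ℕ) : TrueAtParity 1 (vPrefix n) := by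
  refine TrueAtParity.flatten fun B hB => ?_
  obtain ⟨i, -, rfl⟩ := List.mem_map.mp hB
  exact ⟨⟨tm i + 1, by simp [vBlock]; omega⟩, trueAtParity_one_cons_replicate _⟩

theorem not_trueAtParity_compl_sq_compl {x : List Bool} (hx : x ≠ []) (p : ℕ) :
    ¬ TrueAtParity p (x.map not ++ x ++ x ++ x.map not) := by
  intro h
  simp only [TrueAtParity.append_iff, List.length_append, List.length_map] at h
  obtain ⟨⟨⟨h₀, h₁⟩, h₂⟩, h₃⟩ := h
  have hn : 0 < x.length := List.length_pos_of_ne_nil hx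
  have h₀₂ := h₂.mod_two_ne_of_map_not h₀ (by omega)
  have h₁₃ := h₁.mod_two_ne_of_map_not h₃ (by omega)
  have hp := h₀₂ 0 hn
  have hn_even : x.length % 2 = 0 := by
    have := h₁₃ 0 hn
    omega
  exact h₀₂ 1 (by omega) (by omega)

theorem stmt12 (x : List Bool) (hx : x ≠ []) :
    ¬ IsFactorV ((List.map (fun b => !b) x) ++ x ++ x ++ (List.map (fun b => !b) x)) := by
  rintro ⟨n, hfactor⟩
  obtain ⟨p, hp⟩ := (trueAtParity_vPrefix n).exists_of_infix hfactor
  exact not_trueAtParity_compl_sq_compl hx p hp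
end

section
/- Let u = ∏_{i≥0} 0·1^{t_i+2}, with t_i the Thue–Morse sequence. Then u contains no factor of the form x·x·x̄·x̄, where x is a nonempty binary word and x̄ is its letterwise complement. -/
/-- Block `0 1^(t_i+2)` of the word **u**. -/
def uBlock (i : Nat) : List Bool := [false] ++ List.replicate (tm i + 2) true

def uPrefix (n : Nat) : List Bool := ((List.range n).map uBlock).flatten

/-- `L` is a factor of the infinite word **u**. -/
def IsFactorU (L : List Bool) : Prop := ∃ n, L <:+: uPrefix n

/-- Decomposition of a suffix of an append. -/
lemma suffix_append_cases {l a b : List Bool} (h : l <:+ a ++ b) :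
    l <:+ b ∨ ∃ a', a' <:+ a ∧ l = a' ++ b := by
  have hlen := h.length_le
  have heq := List.suffix_iff_eq_drop.mp h
  rw [List.drop_append] at heq
  simp only [List.length_append] at hlen heq
  by_cases hc : l.length ≤ b.length
  · left
    have h1 : a.drop (a.length + b.length - l.length) = [] := by
      apply List.drop_eq_nil_of_le; omega
    rw [h1, List.nil_append] at heq
    rw [heq]
    exact List.drop_suffix _ _
  · right
    refine ⟨a.drop (a.length + b.length - l.length), List.drop_suffix _ _, ?_⟩
    have h2 : a.length + b.length - l.length - a.length = 0 := by omega
    rw [h2, List.drop_zero] at heq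
    exact heq

/-- Decomposition of a prefix of an append. -/
lemma prefix_append_cases {l a b : List Bool} (h : l <+: a ++ b) :
    l <+: a ∨ ∃ b', b' <+: b ∧ l = a ++ b' := by
  have heq := List.prefix_iff_eq_take.mp h
  rw [List.take_append] at heq
  by_cases hc : l.length ≤ a.length
  · left
    have h2 : l.length - a.length = 0 := by omega
    rw [h2, List.take_zero, List.append_nil] at heq
    rw [heq]
    exact List.take_prefix _ _
  · right
    refine ⟨b.take (l.length - a.length), List.take_prefix _ _, ?_⟩
    rw [List.take_of_length_le (by omega)] at heq
    exact heq

/-- A suffix of a block `0 1^k` has at most one `0` and, if it has one, at least `k` ones. -/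
lemma suffix_block_count {k : Nat} (hk : 2 ≤ k) {l : List Bool}
    (h : l <:+ false :: List.replicate k true) :
    2 * l.count false ≤ l.count true := by
  rcases List.suffix_cons_iff.mp h with rfl | h
  · simp [List.count_replicate]
    omega
  · have h0 : l.count false ≤ (List.replicate k true).count false :=
      h.sublist.count_le _
    simp [List.count_replicate] at h0
    omega

/-- Key counting lemma for words built from blocks `0 1^k`, `k ≥ 2`. -/
lemma key_count : ∀ (bs : List Nat), (∀ k ∈ bs, 2 ≤ k) →
    ∀ L : List Bool, L <:+ (bs.map (fun k => false :: List.replicate k true)).flatten →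
    ∀ P : List Bool, P <+: L → 2 * P.count false ≤ P.count true + 2 := by
  intro bs
  induction bs with
  | nil =>
    intro _ L hL P hP
    simp at hL
    subst hL
    simp [List.prefix_nil] at hP
    subst hP
    simp
  | cons k bs ih =>
    intro hks L hL P hP
    have hk : 2 ≤ k := hks k (by simp)
    have hbs : ∀ j ∈ bs, 2 ≤ j := fun j hj => hks j (by simp [hj])
    simp only [List.map_cons, List.flatten_cons] at hL
    rcases suffix_append_cases hL with h | ⟨a', ha', rfl⟩
    · exact ih hbs L h P hP
    · rcases prefix_append_cases hP with h | ⟨P', hP', rfl⟩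
      · have h1 : P.count false ≤ a'.count false := h.sublist.count_le _
        have h2 : a'.count false ≤ (false :: List.replicate k true).count false :=
          ha'.sublist.count_le _
        simp [List.count_replicate] at h2
        omega
      · have h1 := suffix_block_count hk ha'
        have h2 := ih hbs _ List.suffix_rfl P' hP'
        simp only [List.count_append]
        omega

lemma count_false_add_count_true (x : List Bool) :
    x.count false + x.count true = x.length := by
  induction x with
  | nil => simp
  | cons a t iht => cases a <;> simp [List.count_cons] <;> omega

lemma factor_count {L : List Bool} {n : Nat} (h : L <:+: uPrefix n) :
    2 * L.count false ≤ L.count true + 2 := by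
  obtain ⟨t, ht1, ht2⟩ := List.infix_iff_prefix_suffix.mp h
  have hu : uPrefix n =
      (((List.range n).map (fun i => tm i + 2)).map
        (fun k => false :: List.replicate k true)).flatten := by
    simp only [uPrefix, List.map_map]
    rfl
  rw [hu] at ht2
  exact key_count _ (by simp) t ht2 L ht1

theorem stmt15 (x : List Bool) (hx : x ≠ []) :
    ¬ IsFactorU (x ++ x ++ (List.map (fun b => !b) x) ++ (List.map (fun b => !b) x)) := by
  rintro ⟨n, h⟩
  have hcf : (List.map (fun b => !b) x).count false = x.count true := by
    have := List.count_map_of_injective (f := fun b : Bool => !b) x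
      (fun a b => by simp) true
    simpa using this
  have hct : (List.map (fun b => !b) x).count true = x.count false := by
    have := List.count_map_of_injective (f := fun b : Bool => !b) x
      (fun a b => by simp) false
    simpa using this
  have hlen := count_false_add_count_true x
  have hcnt := factor_count h
  simp only [List.count_append, hcf, hct] at hcnt
  have hx1 : x.length = 1 := by
    have hpos : 1 ≤ x.length := List.length_pos_iff.mpr hx
    omega
  obtain ⟨b, rfl⟩ := List.length_eq_one_iff.mp hx1
  have hff : [false, false] <:+: uPrefix n := by
    refine List.IsInfix.trans ?_ h
    cases b
    · exact ⟨[], [true, true], by simp⟩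
    · exact ⟨[true, true], [], by simp⟩
  have := factor_count hff
  simp at this
end

section
/- There exists an infinite binary word that contains no factor of the form x·x·g(x)·x for any nonempty binary word x and any morphic involution g of {0,1}* (identity or complement). -/
def wrd (n : Nat) : Bool :=
  if h : n % 5 = 2 then wrd (n / 5) else decide (3 ≤ n % 5)
termination_by n
decreasing_by omega

lemma wrd_eq (n : Nat) : wrd n = if n % 5 = 2 then wrd (n / 5) else decide (3 ≤ n % 5) := by
  rw [wrd]; split <;> simp_all

lemma wlow (p : Nat) (h : p % 5 = 0 ∨ p % 5 = 1) : wrd p = false := by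
  rw [wrd_eq]; rcases h with h | h <;> simp [h]

lemma whigh (p : Nat) (h : p % 5 = 3 ∨ p % 5 = 4) : wrd p = true := by
  rw [wrd_eq]; rcases h with h | h <;> simp [h]

lemma wmid (p : Nat) (h : p % 5 = 2) : wrd p = wrd (p / 5) := by
  rw [wrd_eq]; simp [h]

lemma descent_phase (p : Nat) (hT : wrd p = true) (hF : wrd (p+1) = false) :
    (p+1) % 5 = 0 := by
  have h : (p+1) % 5 = 0 ∨ (p+1) % 5 = 1 ∨ (p+1) % 5 = 2 ∨ (p+1) % 5 = 3 ∨ (p+1) % 5 = 4 := by omega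
  rcases h with h | h | h | h | h
  · exact h
  · rw [wlow p (by omega)] at hT; exact absurd hT (by simp)
  · rw [wlow p (by omega)] at hT; exact absurd hT (by simp)
  · rw [whigh (p+1) (Or.inl h)] at hF; exact absurd hF (by simp)
  · rw [whigh (p+1) (Or.inr h)] at hF; exact absurd hF (by simp)

lemma ascent_phase (p : Nat) (hF : wrd p = false) (hT : wrd (p+1) = true) :
    (p+1) % 5 = 2 ∨ (p+1) % 5 = 3 := by
  have h : (p+1) % 5 = 0 ∨ (p+1) % 5 = 1 ∨ (p+1) % 5 = 2 ∨ (p+1) % 5 = 3 ∨ (p+1) % 5 = 4 := by omega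
  rcases h with h | h | h | h | h
  · rw [wlow (p+1) (Or.inl h)] at hT; exact absurd hT (by simp)
  · rw [wlow (p+1) (Or.inr h)] at hT; exact absurd hT (by simp)
  · exact Or.inl h
  · exact Or.inr h
  · rw [whigh p (by omega)] at hF; exact absurd hF (by simp)

lemma descent_exists (k : Nat) : ∃ i, i < 5 ∧ wrd (k+i) = true ∧ wrd (k+i+1) = false := by
  refine ⟨4 - k % 5, by omega, ?_, ?_⟩
  · exact whigh _ (by omega)
  · exact wlow _ (by omega)

lemma no_four_run (m : Nat) :
    ¬ (wrd m = wrd (m+1) ∧ wrd (m+1) = wrd (m+2) ∧ wrd (m+2) = wrd (m+3)) := by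
  rintro ⟨h1, h2, h3⟩
  have h : m % 5 = 0 ∨ m % 5 = 1 ∨ m % 5 = 2 ∨ m % 5 = 3 ∨ m % 5 = 4 := by omega
  rcases h with h | h | h | h | h
  · rw [wlow m (by omega)] at h1; rw [whigh (m+3) (by omega)] at h3; simp_all
  · rw [wlow m (by omega)] at h1; rw [whigh (m+2) (by omega)] at h2; simp_all
  · rw [whigh (m+2) (by omega), wlow (m+3) (by omega)] at h3; simp_all
  · rw [whigh m (by omega)] at h1; rw [wlow (m+2) (by omega)] at h2; simp_all
  · rw [whigh m (by omega)] at h1; rw [wlow (m+1) (by omega)] at h1; simp_all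

def psi (b : Bool) (t : Nat) : Bool := if t % 5 = 2 then b else decide (3 ≤ t % 5)

def Vfun (b0 b1 b2 b3 b4 : Bool) (t : Nat) : Bool :=
  psi (if t < 5 then b0 else if t < 10 then b1 else if t < 15 then b2 else if t < 20 then b3 else b4) t

def baseOK : Prop := ∀ b0 b1 b2 b3 b4 : Bool,
    ¬ (b0 = b1 ∧ b1 = b2 ∧ b2 = b3) → ¬ (b1 = b2 ∧ b2 = b3 ∧ b3 = b4) →
    ∀ r, r < 5 → ∀ n, n < 6 → 1 ≤ n → ∀ c : Bool,
    (∀ i, i < n → Vfun b0 b1 b2 b3 b4 (r+n+i) = Vfun b0 b1 b2 b3 b4 (r+i)) →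
    (∀ i, i < n → Vfun b0 b1 b2 b3 b4 (r+2*n+i) = xor c (Vfun b0 b1 b2 b3 b4 (r+i))) →
    (∀ i, i < n → Vfun b0 b1 b2 b3 b4 (r+3*n+i) = Vfun b0 b1 b2 b3 b4 (r+i)) →
    False

set_option synthInstance.maxSize 2000 in
set_option maxHeartbeats 2000000 in
theorem baseOK_holds : baseOK := by unfold baseOK; decide

lemma bridge (q t : Nat) (ht : t < 25) :
    wrd (5*q + t) = Vfun (wrd q) (wrd (q+1)) (wrd (q+2)) (wrd (q+3)) (wrd (q+4)) t := by
  by_cases h2 : t % 5 = 2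
  · have hm : (5*q + t) % 5 = 2 := by omega
    rw [wmid _ hm]
    simp only [Vfun, psi, if_pos h2]
    split_ifs with c1 c2 c3 c4
    · congr 1; omega
    · congr 1; omega
    · congr 1; omega
    · congr 1; omega
    · congr 1; omega
  · have hm : (5*q + t) % 5 = t % 5 := by omega
    rw [wrd_eq, hm]
    simp only [Vfun, psi, if_neg h2]

theorem key (n : Nat) : 1 ≤ n → ∀ k (c : Bool),
    (∀ i, i < n → wrd (k+n+i) = wrd (k+i)) →
    (∀ i, i < n → wrd (k+2*n+i) = xor c (wrd (k+i))) →
    (∀ i, i < n → wrd (k+3*n+i) = wrd (k+i)) → False := by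
  induction n using Nat.strong_induction_on with
  | _ n IH =>
  intro hn k c hA hC hB
  by_cases hsmall : n ≤ 5
  · -- base case via decide
    set q := k / 5 with hq
    have hk : k = 5*q + k % 5 := by omega
    have hb2 : ¬ (wrd (q+1) = wrd (q+2) ∧ wrd (q+2) = wrd (q+3) ∧ wrd (q+3) = wrd (q+4)) := by
      have := no_four_run (q+1)
      simpa [show q+1+1 = q+2 by omega, show q+1+2 = q+3 by omega, show q+1+3 = q+4 by omega]
        using this
    refine baseOK_holds (wrd q) (wrd (q+1)) (wrd (q+2)) (wrd (q+3)) (wrd (q+4))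
      (no_four_run q) hb2 (k % 5) (by omega) n (by omega) hn c ?_ ?_ ?_
    · intro i hi
      rw [← bridge q (k%5+n+i) (by omega), ← bridge q (k%5+i) (by omega)]
      rw [show 5*q+(k%5+n+i) = k+n+i by omega, show 5*q+(k%5+i) = k+i by omega]
      exact hA i hi
    · intro i hi
      rw [← bridge q (k%5+2*n+i) (by omega), ← bridge q (k%5+i) (by omega)]
      rw [show 5*q+(k%5+2*n+i) = k+2*n+i by omega, show 5*q+(k%5+i) = k+i by omega]
      exact hC i hi
    · intro i hi
      rw [← bridge q (k%5+3*n+i) (by omega), ← bridge q (k%5+i) (by omega)]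
      rw [show 5*q+(k%5+3*n+i) = k+3*n+i by omega, show 5*q+(k%5+i) = k+i by omega]
      exact hB i hi
  · -- inductive case
    push_neg at hsmall
    obtain ⟨i, hi5, hT, hF⟩ := descent_exists k
    have e1 : wrd (k+n+i) = true := (hA i (by omega)).trans hT
    have e2 : wrd (k+n+i+1) = false := by
      have h := hA (i+1) (by omega)
      rw [show k+n+(i+1) = k+n+i+1 by omega, show k+(i+1) = k+i+1 by omega] at h
      exact h.trans hF
    have d1 := descent_phase (k+i) hT hF
    have d2 := descent_phase (k+n+i) e1 e2
    have h5n : n % 5 = 0 := by omega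
    cases c with
    | true =>
      have f1 : wrd (k+2*n+i) = false := by
        have h := hC i (by omega); rw [hT] at h; simpa using h
      have f2 : wrd (k+2*n+i+1) = true := by
        have h := hC (i+1) (by omega)
        rw [show k+2*n+(i+1) = k+2*n+i+1 by omega, show k+(i+1) = k+i+1 by omega, hF] at h
        simpa using h
      have := ascent_phase (k+2*n+i) f1 f2
      omega
    | false =>
      obtain ⟨d, hd5, hkd⟩ : ∃ d, d < 5 ∧ (k+d) % 5 = 2 := ⟨(7 - k%5) % 5, by omega, by omega⟩
      set m := n / 5 with hm
      have hnm : n = 5*m := by omega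
      set k' := (k+d)/5 with hk'
      have hkk : k + d = 5*k' + 2 := by omega
      have hA' : ∀ t, t < m → wrd (k'+m+t) = wrd (k'+t) := by
        intro t ht
        have h := hA (d+5*t) (by omega)
        rw [wmid (k+n+(d+5*t)) (by omega), wmid (k+(d+5*t)) (by omega)] at h
        rw [show (k+n+(d+5*t))/5 = k'+m+t by omega, show (k+(d+5*t))/5 = k'+t by omega] at h
        exact h
      have hC' : ∀ t, t < m → wrd (k'+2*m+t) = xor false (wrd (k'+t)) := by
        intro t ht
        have h := hC (d+5*t) (by omega)
        rw [wmid (k+2*n+(d+5*t)) (by omega), wmid (k+(d+5*t)) (by omega)] at h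
        rw [show (k+2*n+(d+5*t))/5 = k'+2*m+t by omega, show (k+(d+5*t))/5 = k'+t by omega] at h
        exact h
      have hB' : ∀ t, t < m → wrd (k'+3*m+t) = wrd (k'+t) := by
        intro t ht
        have h := hB (d+5*t) (by omega)
        rw [wmid (k+3*n+(d+5*t)) (by omega), wmid (k+(d+5*t)) (by omega)] at h
        rw [show (k+3*n+(d+5*t))/5 = k'+3*m+t by omega, show (k+(d+5*t))/5 = k'+t by omega] at h
        exact h
      exact IH m (by omega) (by omega) k' false hA' hC' hB'

lemma main_aux (x y : List Bool) (k n : Nat) (hxn : x.length = n) (hyn : y.length = n)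
    (h1 : 1 ≤ n) (c : Bool)
    (hL : x ++ x ++ y ++ x =
      (List.range (x ++ x ++ y ++ x).length).map (fun j => wrd (k+j)))
    (hxy : ∀ i, i < n → y[i]? = x[i]?.map (fun b => xor c b)) : False := by
  have hlen : (x ++ x ++ y ++ x).length = 4*n := by simp [hxn, hyn]; omega
  have hj : ∀ j, j < 4*n → (x ++ x ++ y ++ x)[j]? = some (wrd (k+j)) := by
    intro j hj
    conv_lhs => rw [hL, hlen]
    simp [List.getElem?_map, List.getElem?_range, hj]
  have q0 : ∀ i, i < n → x[i]? = some (wrd (k+i)) := by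
    intro i hi
    have h := hj i (by omega)
    rw [List.getElem?_append_left (by simp [hxn, hyn]; omega),
        List.getElem?_append_left (by simp [hxn]; omega),
        List.getElem?_append_left (by omega)] at h
    exact h
  have q1 : ∀ i, i < n → x[i]? = some (wrd (k+n+i)) := by
    intro i hi
    have h := hj (n+i) (by omega)
    rw [List.getElem?_append_left (by simp [hxn, hyn]; omega),
        List.getElem?_append_left (by simp [hxn]; omega),
        List.getElem?_append_right (by omega),
        show n + i - x.length = i by omega,
        show k + (n+i) = k+n+i by omega] at h
    exact h
  have q2 : ∀ i, i < n → y[i]? = some (wrd (k+2*n+i)) := by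
    intro i hi
    have h := hj (2*n+i) (by omega)
    rw [List.getElem?_append_left (by simp [hxn, hyn]; omega),
        List.getElem?_append_right (by simp [hxn]; omega),
        show 2*n + i - (x ++ x).length = i by simp [hxn]; omega,
        show k + (2*n+i) = k+2*n+i by omega] at h
    exact h
  have q3 : ∀ i, i < n → x[i]? = some (wrd (k+3*n+i)) := by
    intro i hi
    have h := hj (3*n+i) (by omega)
    rw [List.getElem?_append_right (by simp [hxn, hyn]; omega),
        show 3*n + i - (x ++ x ++ y).length = i by simp [hxn, hyn]; omega,
        show k + (3*n+i) = k+3*n+i by omega] at h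
    exact h
  refine key n h1 k c ?_ ?_ ?_
  · intro i hi
    have := (q1 i hi).symm.trans (q0 i hi)
    exact (Option.some.injEq _ _ ▸ this)
  · intro i hi
    have h2 := (q2 i hi).symm.trans (hxy i hi)
    rw [q0 i hi] at h2
    simpa using h2
  · intro i hi
    have := (q3 i hi).symm.trans (q0 i hi)
    exact (Option.some.injEq _ _ ▸ this)

/-- `L` is a factor of the infinite word `w : ℕ → Bool`. -/
def IsFactorOf (w : Nat → Bool) (L : List Bool) : Prop :=
  ∃ k, L = (List.range L.length).map (fun j => w (k + j))

theorem stmt17 :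
    ∃ w : Nat → Bool, ∀ (x : List Bool) (g : List Bool → List Bool),
      x ≠ [] → ((∀ l, g l = l) ∨ (∀ l, g l = l.map (fun b => !b))) →
      ¬ IsFactorOf w (x ++ x ++ g x ++ x) := by
  refine ⟨wrd, ?_⟩
  intro x g hx hg hfac
  obtain ⟨k, hL⟩ := hfac
  have h1 : 1 ≤ x.length := List.length_pos_iff.mpr hx
  rcases hg with hg | hg
  · rw [hg x] at hL
    exact main_aux x x k x.length rfl rfl h1 false hL (by intro i hi; simp)
  · rw [hg x] at hL
    exact main_aux x (x.map (fun b => !b)) k x.length rfl (by simp) h1 true hL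
      (by intro i hi; simp [List.getElem?_map])
end

section
/- There exists an infinite binary word that contains no factor of the form g(x)·x·x·g(x) for any nonempty binary word x and any antimorphic involution g of {0,1}* (reversal or reverse complement). -/
def OccursAt {α : Type*} (w : ℕ → α) (k : ℕ) (L : List α) : Prop :=
  ∀ j (h : j < L.length), L[j] = w (k + j)

theorem isFactorOf_iff_exists_occursAt {w : ℕ → Bool} {L : List Bool} :
    IsFactorOf w L ↔ ∃ k, OccursAt w k L := by
  refine exists_congr fun k => ⟨fun h j hj => ?_, fun h => ?_⟩
  · rw [List.getElem_of_eq h hj, List.getElem_map, List.getElem_range]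
  · exact List.ext_getElem (by simp) fun j h₁ _ => by simp [h j h₁]

section OccursAt

variable {α : Type*} {w : ℕ → α} {k : ℕ}

theorem occursAt_append {u v : List α} :
    OccursAt w k (u ++ v) ↔ OccursAt w k u ∧ OccursAt w (k + u.length) v := by
  refine ⟨fun h => ⟨fun j hj => ?_, fun j hj => ?_⟩, fun ⟨hu, hv⟩ j hj => ?_⟩
  · rw [← h j (by rw [List.length_append]; omega), List.getElem_append_left hj]
  · rw [add_assoc, ← h (u.length + j) (by rw [List.length_append]; omega),
      List.getElem_append_right (by omega)]
    simp only [Nat.add_sub_cancel_left]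
  · by_cases hju : j < u.length
    · simpa [List.getElem_append_left hju] using hu j hju
    · have := hv (j - u.length) (by rw [List.length_append] at hj; omega)
      rw [List.getElem_append_right (by omega), this]
      congr 1
      omega

theorem OccursAt.reflect {f : α → α} {x : List α} (hg : OccursAt w k (x.map f).reverse)
    (hx : OccursAt w (k + x.length) x) {j : ℕ} (hj : j < x.length) :
    w (k + j) = f (w (k + (2 * x.length - 1 - j))) := by
  have hlen : (x.map f).length = x.length := List.length_map f
  have := hg j (by rwa [List.length_reverse, hlen])
  rw [List.getElem_reverse, List.getElem_map, hx _ (by omega)] at this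
  rw [← this, hlen]
  congr 2
  omega

theorem OccursAt.apply_add_eq {L : List α} {k' : ℕ} (h : OccursAt w k L) (h' : OccursAt w k' L)
    {j : ℕ} (hj : j < L.length) : w (k + j) = w (k' + j) := by
  rw [← h j hj, ← h' j hj]

theorem OccursAt.mirror_square_mirror {f : α → α} {x : List α}
    (h : OccursAt w k ((x.map f).reverse ++ x ++ x ++ (x.map f).reverse)) {j : ℕ}
    (hj : j < x.length) :
    w (k + j) = f (w (k + (2 * x.length - 1 - j))) ∧
      w (k + (x.length + j)) = w (k + (2 * x.length + j)) ∧
      w (k + (3 * x.length + j)) = w (k + j) := by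
  obtain ⟨⟨⟨hg, hx⟩, hx'⟩, hg'⟩ := by simpa only [occursAt_append] using h
  simp only [List.length_append, List.length_reverse, List.length_map] at hx hx' hg'
  refine ⟨hg.reflect hx hj, ?_, ?_⟩
  · simpa [add_assoc, two_mul] using hx.apply_add_eq hx' hj
  · simpa [add_assoc, show 3 * x.length = x.length + x.length + x.length by ring] using
      hg'.apply_add_eq hg (by simpa using hj)

end OccursAt

theorem exists_xor_of_antimorphic {g : List Bool → List Bool}
    (hg : (∀ l, g l = l.reverse) ∨ (∀ l, g l = (l.map (fun b => !b)).reverse)) :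
    ∃ c : Bool, g = fun l => (l.map (· ^^ c)).reverse := by
  rcases hg with hg | hg
  · exact ⟨false, funext fun l => by simp [hg]⟩
  · exact ⟨true, funext fun l => by simp [hg]⟩

def periodicWord (i : ℕ) : Bool :=
  [false, false, false, true, false, false, false, true, false, true, false, true, true, true].getD
    (i % 14) false

theorem periodicWord_congr {i i' : ℕ} (h : i % 14 = i' % 14) : periodicWord i = periodicWord i' := by
  rw [periodicWord, periodicWord, h]

theorem periodicWord_no_mirror_center :
    ∀ s < 14, ∀ c : Bool, ∃ r < 14, periodicWord r ≠ (periodicWord (s + 14 - r) ^^ c) := by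
  decide

theorem periodicWord_avoids_short :
    ∀ k < 14, ∀ n < 14, 0 < n → ∀ c : Bool, ∃ j < n,
      ¬ (periodicWord (k + j) = (periodicWord (k + (2 * n - 1 - j)) ^^ c) ∧
        periodicWord (k + (n + j)) = periodicWord (k + (2 * n + j)) ∧
        periodicWord (k + (3 * n + j)) = periodicWord (k + j)) := by
  decide

theorem periodicWord_avoids (k n : ℕ) (hn : 0 < n) (c : Bool) : ∃ j < n,
      ¬ (periodicWord (k + j) = (periodicWord (k + (2 * n - 1 - j)) ^^ c) ∧
        periodicWord (k + (n + j)) = periodicWord (k + (2 * n + j)) ∧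
        periodicWord (k + (3 * n + j)) = periodicWord (k + j)) := by
  rcases lt_or_ge n 14 with hsmall | hbig
  · have hmod (e : ℕ) : periodicWord (k % 14 + e) = periodicWord (k + e) :=
      periodicWord_congr (by omega)
    simpa only [hmod] using periodicWord_avoids_short (k % 14) (by omega) n hsmall hn c
  · obtain ⟨r, hr, hne⟩ := periodicWord_no_mirror_center ((2 * k + 2 * n - 1) % 14) (by omega) c
    set j := (r + 14 - k % 14) % 14
    refine ⟨j, by omega, fun h => hne ?_⟩
    calc periodicWord r = periodicWord (k + j) := periodicWord_congr (by omega)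
      _ = (periodicWord (k + (2 * n - 1 - j)) ^^ c) := h.1
      _ = (periodicWord ((2 * k + 2 * n - 1) % 14 + 14 - r) ^^ c) := by
        rw [periodicWord_congr (i' := (2 * k + 2 * n - 1) % 14 + 14 - r) (by omega)]

theorem stmt18 :
    ∃ w : Nat → Bool, ∀ (x : List Bool) (g : List Bool → List Bool),
      x ≠ [] → ((∀ l, g l = l.reverse) ∨ (∀ l, g l = (l.map (fun b => !b)).reverse)) →
      ¬ IsFactorOf w (g x ++ x ++ x ++ g x) := by
  refine ⟨periodicWord, fun x g hx hg hfactor => ?_⟩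
  obtain ⟨c, rfl⟩ := exists_xor_of_antimorphic hg
  obtain ⟨k, hk⟩ := isFactorOf_iff_exists_occursAt.1 hfactor
  obtain ⟨j, hj, hne⟩ := periodicWord_avoids k x.length (List.length_pos_iff.2 hx) c
  exact hne (hk.mirror_square_mirror hj)
end

section
/- The Thue–Morse sequence contains no overlap, i.e., no factor of the form a·z·a·z·a where a is a single letter and z is a (possibly empty) binary word. -/
/-- The Thue–Morse sequence as a function `ℕ → Bool`. -/
def thueMorse (i : Nat) : Bool := decide ((Nat.digits 2 i).sum % 2 = 1)

/-- `w k … w (k + 2p)` is an overlap `a z a z a` with `|a z| = p`. -/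
def OverlapAt (w : ℕ → Bool) (k p : ℕ) : Prop :=
  ∀ i ≤ p, w (k + i) = w (k + p + i)

theorem List.getElem_append_self_append_singleton {α : Type*} (u : List α) (hu : 0 < u.length)
    (i : ℕ) (hi : i ≤ u.length) :
    (u ++ u ++ [u[0]])[i]'(by simp; omega) = (u ++ u ++ [u[0]])[u.length + i]'(by simp; omega) := by
  rcases hi.lt_or_eq with hi | rfl
  · simp [List.getElem_append_left, List.getElem_append_right, hi]
  · simp [List.getElem_append_left, List.getElem_append_right, hu]

theorem IsFactorOf.exists_getElem_eq {w : ℕ → Bool} {L : List Bool} (h : IsFactorOf w L) :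
    ∃ k, ∀ i (hi : i < L.length), L[i] = w (k + i) := by
  obtain ⟨k, hk⟩ := h
  exact ⟨k, fun i hi => by simp [List.getElem_of_eq hk hi]⟩

theorem IsFactorOf.exists_overlapAt {w : ℕ → Bool} {u : List Bool} (hu : 0 < u.length)
    (h : IsFactorOf w (u ++ u ++ [u[0]])) : ∃ k, OverlapAt w k u.length := by
  obtain ⟨k, hk⟩ := h.exists_getElem_eq
  refine ⟨k, fun i hi => ?_⟩
  have := u.getElem_append_self_append_singleton hu i hi
  rwa [hk, hk, ← add_assoc] at this

theorem apply_add_eq_xor_of_forall_succ_eq_not {w : ℕ → Bool} {k n : ℕ}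
    (h : ∀ j < n, w (k + j + 1) = !w (k + j)) : w (k + n) = (w k ^^ decide (Odd n)) := by
  induction n with
  | zero => simp
  | succ n ih =>
    rw [← add_assoc, h n n.lt_succ_self, ih fun j hj => h j (by omega)]
    simp only [Nat.odd_add_one, decide_not, Bool.xor_not]

theorem thueMorse_two_mul_add (n : ℕ) {r : ℕ} (hr : r < 2) :
    thueMorse (2 * n + r) = (thueMorse n ^^ decide (r = 1)) := by
  rcases Nat.eq_zero_or_pos (2 * n + r) with h | h
  · obtain ⟨rfl, rfl⟩ : n = 0 ∧ r = 0 := by omega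
    rfl
  · unfold thueMorse
    rw [Nat.digits_def' (by norm_num) h, List.sum_cons,
      show (2 * n + r) % 2 = r by omega, show (2 * n + r) / 2 = n by omega]
    interval_cases r
    · simp
    · rcases Nat.mod_two_eq_zero_or_one (Nat.digits 2 n).sum with h | h <;> simp [Nat.add_mod, h]

theorem thueMorse_succ_of_even {m : ℕ} (hm : Even m) : thueMorse (m + 1) = !thueMorse m := by
  obtain ⟨n, rfl⟩ := hm
  rw [← two_mul, thueMorse_two_mul_add n one_lt_two, ← add_zero (2 * n),
    thueMorse_two_mul_add n two_pos]
  simp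

theorem OverlapAt.thueMorse_div_two {k q : ℕ} (H : OverlapAt thueMorse k (2 * q)) :
    OverlapAt thueMorse (k / 2) q := by
  intro i hi
  have h := H (2 * i) (by omega)
  rwa [show k + 2 * i = 2 * (k / 2 + i) + k % 2 by omega,
    show k + 2 * q + 2 * i = 2 * (k / 2 + q + i) + k % 2 by omega,
    thueMorse_two_mul_add _ (Nat.mod_lt k two_pos), thueMorse_two_mul_add _ (Nat.mod_lt k two_pos),
    Bool.xor_left_inj] at h

theorem thueMorse_not_overlapAt_of_odd {k p : ℕ} (hp : Odd p) : ¬ OverlapAt thueMorse k p := by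
  intro H
  have alternating : ∀ j < p, thueMorse (k + j + 1) = !thueMorse (k + j) := by
    intro j hj
    rcases Nat.even_or_odd (k + j) with he | ho
    · exact thueMorse_succ_of_even he
    · have h := thueMorse_succ_of_even (m := k + p + j) (by rw [add_right_comm]; exact ho.add_odd hp)
      rwa [← H j hj.le, add_assoc, ← H (j + 1) hj, ← add_assoc] at h
  have h0 := H 0 p.zero_le
  rw [add_zero, add_zero, apply_add_eq_xor_of_forall_succ_eq_not alternating,
    decide_eq_true hp, Bool.xor_true] at h0
  simp at h0

theorem thueMorse_not_overlapAt {p : ℕ} (hp : 0 < p) (k : ℕ) : ¬ OverlapAt thueMorse k p := by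
  induction p using Nat.strong_induction_on generalizing k with
  | _ p ih =>
    obtain ⟨q, rfl | rfl⟩ := Nat.even_or_odd' p
    · exact fun H => ih q (by omega) (by omega) (k / 2) H.thueMorse_div_two
    · exact thueMorse_not_overlapAt_of_odd (odd_two_mul_add_one q)

theorem stmt19 (a : Bool) (z : List Bool) :
    ¬ IsFactorOf thueMorse ([a] ++ z ++ [a] ++ z ++ [a]) := by
  intro h
  obtain ⟨k, hk⟩ := IsFactorOf.exists_overlapAt (u := a :: z) (by simp) (by simpa using h)
  exact thueMorse_not_overlapAt (by simp) k hk
end
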